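/- arXiv:1005.0973 — 9 statements merged into one kernel-verified Lean document; each statement's English description precedes it below -/
import Mathlib

section
/- Let d ≥ 2 and let a < b be reals. Let f : ℝ → ℝ^d be differentiable at every t ∈ [a,b] with f'(t)₀² − (f'(t)₁² + ⋯ + f'(t)_{d−1}²) = 1 for all t ∈ [a,b]. Then b − a ≤ |f(b)₀ − f(a)₀|. -/
open Set

theorem one_le_abs_of_sq_sub_sum_sq_eq_one {d : ℕ} [NeZero d] {v : Fin d → ℝ}
    (hv : v 0 ^ 2 - ∑ i ∈ Finset.univ.erase (0 : Fin d), v i ^ 2 = 1) : 1 ≤ |v 0| := by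
  have hsum : 0 ≤ ∑ i ∈ Finset.univ.erase (0 : Fin d), v i ^ 2 :=
    Finset.sum_nonneg fun i _ => sq_nonneg _
  exact one_le_sq_iff_one_le_abs _ |>.mp (by linarith)

theorem mul_sub_le_abs_sub_of_le_abs_deriv {g g' : ℝ → ℝ} {a b C : ℝ} (hab : a < b)
    (hcont : ContinuousOn g (Icc a b)) (hg : ∀ t ∈ Ioo a b, HasDerivAt g (g' t) t)
    (hg' : ∀ t ∈ Ioo a b, C ≤ |g' t|) : C * (b - a) ≤ |g b - g a| := by
  obtain ⟨c, hc, hslope⟩ := exists_hasDerivAt_eq_slope g g' hab hcont hg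
  have hba : 0 < b - a := sub_pos.mpr hab
  calc C * (b - a) ≤ |g' c| * (b - a) := by gcongr; exact hg' c hc
    _ = |g b - g a| := by rw [hslope, abs_div, abs_of_pos hba, div_mul_cancel₀ _ hba.ne']

theorem twin_paradox_time_le_general (d : ℕ) [NeZero d] (a b : ℝ) (hab : a < b)
    (f f' : ℝ → Fin d → ℝ)
    (hf : ∀ t ∈ Set.Icc a b, HasDerivAt f (f' t) t)
    (hwp : ∀ t ∈ Set.Icc a b,
      (f' t 0) ^ 2 - ∑ i ∈ Finset.univ.erase (0 : Fin d), (f' t i) ^ 2 = 1) :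
    b - a ≤ |f b 0 - f a 0| := by
  have htime : ∀ t ∈ Icc a b, HasDerivAt (fun s => f s 0) (f' t 0) t :=
    fun t ht => hasDerivAt_pi.mp (hf t ht) 0
  simpa using mul_sub_le_abs_sub_of_le_abs_deriv hab
    (fun t ht => (htime t ht).continuousAt.continuousWithinAt)
    (fun t ht => htime t (Ioo_subset_Icc_self ht))
    (fun t ht => one_le_abs_of_sq_sub_sum_sq_eq_one (hwp t (Ioo_subset_Icc_self ht)))

/-- Part (i) of the key theorem for the Twin Paradox: a well-parametrized
timelike curve measures at most the coordinate-time difference. -/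
theorem twin_paradox_time_le (d : ℕ) [NeZero d] (hd : 2 ≤ d) (a b : ℝ) (hab : a < b)
    (f f' : ℝ → Fin d → ℝ)
    (hf : ∀ t ∈ Set.Icc a b, HasDerivAt f (f' t) t)
    (hwp : ∀ t ∈ Set.Icc a b,
      (f' t 0) ^ 2 - ∑ i ∈ Finset.univ.erase (0 : Fin d), (f' t i) ^ 2 = 1) :
    b - a ≤ |f b 0 - f a 0| :=
  twin_paradox_time_le_general d a b hab f f' hf hwp
end

section
/- Let d ≥ 2 and let a < b be reals. Let f : ℝ → ℝ^d be differentiable at every t ∈ [a,b] with f'(t)₀² − (f'(t)₁² + ⋯ + f'(t)_{d−1}²) = 1 for all t ∈ [a,b]. If there exists x ∈ [a,b] such that the space components of f(x) differ from those of f(a), i.e. (f(x)₁, …, f(x)_{d−1}) ≠ (f(a)₁, …, f(a)_{d−1}), then b − a < |f(b)₀ − f(a)₀|. -/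
open Set

lemma key_aux (a b : ℝ) (hab : a < b) (g g' : ℝ → ℝ)
    (hg : ∀ t ∈ Set.Icc a b, HasDerivAt g (g' t) t)
    (h1 : ∀ t ∈ Set.Icc a b, 1 ≤ g' t)
    (t0 : ℝ) (ht0 : t0 ∈ Set.Ico a b) (hgt : 1 < g' t0) :
    b - a < g b - g a := by
  set h : ℝ → ℝ := fun t => g t - t with hh
  have hderiv : ∀ t ∈ Set.Icc a b, HasDerivAt h (g' t - 1) t := fun t ht =>
    (hg t ht).sub (hasDerivAt_id t)
  have hmono : MonotoneOn h (Set.Icc a b) := by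
    apply monotoneOn_of_deriv_nonneg (convex_Icc a b)
    · exact fun t ht => (hderiv t ht).continuousAt.continuousWithinAt
    · intro t ht
      rw [interior_Icc] at ht
      exact (hderiv t (Ioo_subset_Icc_self ht)).differentiableAt.differentiableWithinAt
    · intro t ht
      rw [interior_Icc] at ht
      rw [(hderiv t (Ioo_subset_Icc_self ht)).deriv]
      linarith [h1 t (Ioo_subset_Icc_self ht)]
  -- strictness at t0
  have ht0I : t0 ∈ Set.Icc a b := Ico_subset_Icc_self ht0
  have hd := hderiv t0 ht0I
  rw [hasDerivAt_iff_tendsto_slope] at hd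
  have hev : ∀ᶠ s in nhdsWithin t0 {t0}ᶜ, 0 < slope h t0 s :=
    hd.eventually (eventually_gt_nhds (by linarith))
  have hle : nhdsWithin t0 (Set.Ioi t0) ≤ nhdsWithin t0 {t0}ᶜ :=
    nhdsWithin_mono _ (fun s hs => ne_of_gt hs)
  have hmem : Set.Ioo t0 b ∈ nhdsWithin t0 (Set.Ioi t0) :=
    Ioo_mem_nhdsGT_of_mem ⟨le_refl _, ht0.2⟩
  have : ∃ s, 0 < slope h t0 s ∧ s ∈ Set.Ioo t0 b := by
    have hev' : ∀ᶠ s in nhdsWithin t0 (Set.Ioi t0), 0 < slope h t0 s := hle hev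
    have hmem' : ∀ᶠ s in nhdsWithin t0 (Set.Ioi t0), s ∈ Set.Ioo t0 b :=
      Filter.eventually_of_mem hmem (fun s hs => hs)
    rcases (hev'.and hmem').exists with ⟨s, hs1, hs2⟩
    exact ⟨s, hs1, hs2⟩
  rcases this with ⟨s, hslope, hs⟩
  have hst : 0 < s - t0 := by linarith [hs.1]
  rw [slope_def_field] at hslope
  have hnum : 0 < h s - h t0 := by
    have := mul_pos hslope hst
    rwa [div_mul_cancel₀ _ (ne_of_gt hst)] at this
  have h1' : h a ≤ h t0 := hmono (left_mem_Icc.2 hab.le) ht0I ht0.1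
  have h2' : h s ≤ h b := hmono ⟨by linarith [ht0.1, hs.1], hs.2.le⟩ (right_mem_Icc.2 hab.le) hs.2.le
  have : h a < h b := by linarith
  simp only [hh] at this
  linarith

/-- Part (ii) of the key theorem for the Twin Paradox: strict inequality if the
space components change somewhere. -/
theorem twin_paradox_time_lt (d : ℕ) [NeZero d] (hd : 2 ≤ d) (a b : ℝ) (hab : a < b)
    (f f' : ℝ → Fin d → ℝ)
    (hf : ∀ t ∈ Set.Icc a b, HasDerivAt f (f' t) t)
    (hwp : ∀ t ∈ Set.Icc a b,
      (f' t 0) ^ 2 - ∑ i ∈ Finset.univ.erase (0 : Fin d), (f' t i) ^ 2 = 1)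
    (hmove : ∃ x ∈ Set.Icc a b, ∃ i : Fin d, i ≠ 0 ∧ f x i ≠ f a i) :
    b - a < |f b 0 - f a 0| := by
  -- componentwise derivatives
  have hcomp : ∀ (j : Fin d), ∀ t ∈ Set.Icc a b, HasDerivAt (fun s => f s j) (f' t j) t := by
    intro j t ht
    exact hasDerivAt_pi.1 (hf t ht) j
  -- square of time derivative ≥ 1
  have hsq : ∀ t ∈ Set.Icc a b, 1 ≤ (f' t 0) ^ 2 := by
    intro t ht
    have h := hwp t ht
    have hnn : (0:ℝ) ≤ ∑ i ∈ Finset.univ.erase (0 : Fin d), (f' t i) ^ 2 :=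
      Finset.sum_nonneg fun i _ => sq_nonneg _
    linarith
  have hne : ∀ t ∈ Set.Icc a b, f' t 0 ≠ 0 := by
    intro t ht h0
    have := hsq t ht
    rw [h0] at this; norm_num at this
  -- find interior point where spatial derivative is nonzero
  obtain ⟨x, hx, i, hi0, hfx⟩ := hmove
  have hax : a < x := by
    rcases lt_or_eq_of_le hx.1 with h | h
    · exact h
    · exact absurd (h ▸ rfl) hfx
  obtain ⟨c, hc, hcslope⟩ := exists_hasDerivAt_eq_slope (fun s => f s i) (fun s => f' s i) hax
    (fun t ht => (hcomp i t ⟨ht.1, ht.2.trans hx.2⟩).continuousAt.continuousWithinAt)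
    (fun t ht => hcomp i t ⟨ht.1.le, ht.2.le.trans hx.2⟩)
  have hcI : c ∈ Set.Icc a b := ⟨hc.1.le, hc.2.le.trans hx.2⟩
  have hcIco : c ∈ Set.Ico a b := ⟨hc.1.le, lt_of_lt_of_le hc.2 hx.2⟩
  have hci : f' c i ≠ 0 := by
    rw [hcslope]
    exact div_ne_zero (sub_ne_zero.2 hfx) (ne_of_gt (by linarith))
  have hcsq : 1 < (f' c 0) ^ 2 := by
    have h := hwp c hcI
    have hterm : (f' c i) ^ 2 ≤ ∑ j ∈ Finset.univ.erase (0 : Fin d), (f' c j) ^ 2 :=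
      Finset.single_le_sum (fun j _ => sq_nonneg (f' c j))
        (Finset.mem_erase.2 ⟨hi0, Finset.mem_univ i⟩)
    have hpos : 0 < (f' c i) ^ 2 := pow_pos (abs_pos.2 hci) 2 |>.trans_le (le_of_eq (sq_abs _))
    nlinarith
  -- sign dichotomy via Darboux
  rcases hasDerivWithinAt_forall_lt_or_forall_gt_of_forall_ne (convex_Icc a b)
      (fun t ht => ((hcomp 0 t ht)).hasDerivWithinAt) (m := 0) hne with hneg | hpos
  · -- f' t 0 ≤ -1 everywhere
    have h1 : ∀ t ∈ Set.Icc a b, 1 ≤ -(f' t 0) := by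
      intro t ht
      have := hsq t ht
      nlinarith [hneg t ht]
    have hc1 : 1 < -(f' c 0) := by nlinarith [hneg c hcI]
    have := key_aux a b hab (fun t => -(f t 0)) (fun t => -(f' t 0))
      (fun t ht => (hcomp 0 t ht).neg) h1 c hcIco hc1
    calc b - a < -(f b 0) - -(f a 0) := this
      _ = -(f b 0 - f a 0) := by ring
      _ ≤ |f b 0 - f a 0| := neg_le_abs _
  · have h1 : ∀ t ∈ Set.Icc a b, 1 ≤ f' t 0 := by
      intro t ht
      have := hsq t ht
      nlinarith [hpos t ht]
    have hc1 : 1 < f' c 0 := by nlinarith [hpos c hcI]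
    have := key_aux a b hab (fun t => f t 0) (fun t => f' t 0)
      (hcomp 0) h1 c hcIco hc1
    calc b - a < f b 0 - f a 0 := this
      _ ≤ |f b 0 - f a 0| := le_abs_self _
end

section
/- Let d ≥ 2, let a ≤ b and a' ≤ b' be reals, and let f, g : ℝ → ℝ^d be differentiable on [a,b] and on [a',b'] respectively, with f'(t)₀² − (f'(t)₁² + ⋯ + f'(t)_{d−1}²) = 1 for all t ∈ [a,b] and g'(t)₀² − (g'(t)₁² + ⋯ + g'(t)_{d−1}²) = 1 for all t ∈ [a',b']. If the image of [a,b] under f equals the image of [a',b'] under g, then b − a = b' − a'. -/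
/-!
Reversing a curve if necessary, both curves may be taken future-directed: by Darboux the time
component of the velocity, which never vanishes, has constant sign. The time coordinates `u`, `v`
are then strictly increasing, so each curve is injective and `φ = f⁻¹ ∘ g` is a strictly
increasing bijection `[a', b'] → [a, b]`, hence continuous. As `u ∘ φ = v` and `u' ≠ 0`, `φ` is
differentiable inside `[a', b']`, where `g' = φ' • f'`; since both velocities have Minkowski square
`1`, `φ' = 1`, and integrating gives `b - a = b' - a'`.
-/

open Set Function Filter Topology

theorem StrictMonoOn.continuousOn_of_ordConnected_image {α β : Type*}
    [LinearOrder α] [TopologicalSpace α] [OrderTopology α]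
    [LinearOrder β] [TopologicalSpace β] [OrderTopology β] {f : α → β} {s : Set α}
    (hf : StrictMonoOn f s) (hs : s.OrdConnected) (hfs : (f '' s).OrdConnected) :
    ContinuousOn f s := by
  rw [continuousOn_iff_continuous_domRestrict]
  exact continuous_subtype_val.comp (hf.orderIso f s).continuous

section Curves

variable {d : ℕ} [NeZero d]

def minkowskiSq (v : Fin d → ℝ) : ℝ :=
  v 0 ^ 2 - ∑ i ∈ Finset.univ.erase (0 : Fin d), v i ^ 2

theorem minkowskiSq_smul (c : ℝ) (v : Fin d → ℝ) :
    minkowskiSq (c • v) = c ^ 2 * minkowskiSq v := by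
  simp only [minkowskiSq, Pi.smul_apply, smul_eq_mul, mul_pow, ← Finset.mul_sum]
  ring

theorem minkowskiSq_neg (v : Fin d → ℝ) : minkowskiSq (-v) = minkowskiSq v := by
  simpa using minkowskiSq_smul (-1) v

theorem minkowskiSq_le_sq (v : Fin d → ℝ) : minkowskiSq v ≤ v 0 ^ 2 :=
  sub_le_self _ (Finset.sum_nonneg fun _ _ => sq_nonneg _)

theorem eq_one_of_hasDerivAt_comp {f g : ℝ → Fin d → ℝ} {φ : ℝ → ℝ} {v w : Fin d → ℝ}
    {c s : ℝ} (hf : HasDerivAt f v (φ s)) (hφ : HasDerivAt φ c s) (hg : HasDerivAt g w s)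
    (hfg : f ∘ φ =ᶠ[𝓝 s] g) (hv : minkowskiSq v = 1) (hw : minkowskiSq w = 1) (hc : 0 < c) :
    c = 1 := by
  have hw_eq : w = c • v := hg.unique ((hf.scomp s hφ).congr_of_eventuallyEq hfg.symm)
  rwa [hw_eq, minkowskiSq_smul, hv, mul_one, pow_eq_one_iff_of_nonneg hc.le two_ne_zero] at hw

def IsWellParametrized (f f' : ℝ → Fin d → ℝ) (a b : ℝ) : Prop :=
  ∀ t ∈ Icc a b, HasDerivAt f (f' t) t ∧ minkowskiSq (f' t) = 1

namespace IsWellParametrized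

variable {f f' g g' : ℝ → Fin d → ℝ} {a b a' b' : ℝ}

theorem hasDerivAt_time (hf : IsWellParametrized f f' a b) {t : ℝ} (ht : t ∈ Icc a b) :
    HasDerivAt (fun s => f s 0) (f' t 0) t :=
  hasDerivAt_pi.1 (hf t ht).1 0

theorem continuousOn_time (hf : IsWellParametrized f f' a b) :
    ContinuousOn (fun s => f s 0) (Icc a b) :=
  fun _ ht => (hf.hasDerivAt_time ht).continuousAt.continuousWithinAt

theorem time_deriv_ne_zero (hf : IsWellParametrized f f' a b) {t : ℝ} (ht : t ∈ Icc a b) :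
    f' t 0 ≠ 0 := by
  intro h
  have := minkowskiSq_le_sq (f' t)
  rw [(hf t ht).2, h] at this
  norm_num at this

theorem time_deriv_neg_or_pos (hf : IsWellParametrized f f' a b) :
    (∀ t ∈ Icc a b, f' t 0 < 0) ∨ ∀ t ∈ Icc a b, 0 < f' t 0 :=
  hasDerivWithinAt_forall_lt_or_forall_gt_of_forall_ne (convex_Icc a b)
    (fun _ ht => (hf.hasDerivAt_time ht).hasDerivWithinAt) fun _ => hf.time_deriv_ne_zero

theorem strictMonoOn_time (hf : IsWellParametrized f f' a b)
    (hf₀ : ∀ t ∈ Icc a b, 0 < f' t 0) : StrictMonoOn (fun s => f s 0) (Icc a b) :=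
  strictMonoOn_of_hasDerivWithinAt_pos (convex_Icc a b) hf.continuousOn_time
    (fun _ ht => (hf.hasDerivAt_time (interior_subset ht)).hasDerivWithinAt)
    fun t ht => hf₀ t (interior_subset ht)

theorem reverse (hf : IsWellParametrized f f' a b) :
    IsWellParametrized (fun t => f (a + b - t)) (fun t => -f' (a + b - t)) a b := by
  intro t ht
  have hrev : a + b - t ∈ Icc a b := ⟨by linarith [ht.2], by linarith [ht.1]⟩
  exact ⟨(hf _ hrev).1.comp_const_sub (a + b) t, by rw [minkowskiSq_neg, (hf _ hrev).2]⟩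

theorem exists_futureDirected (hf : IsWellParametrized f f' a b) :
    ∃ F F' : ℝ → Fin d → ℝ, IsWellParametrized F F' a b ∧ (∀ t ∈ Icc a b, 0 < F' t 0) ∧
      F '' Icc a b = f '' Icc a b := by
  rcases hf.time_deriv_neg_or_pos with hneg | hpos
  · refine ⟨_, _, hf.reverse, fun t ht => neg_pos.2 (hneg _ ?_), ?_⟩
    · exact ⟨by linarith [ht.2], by linarith [ht.1]⟩
    · rw [show (fun t => f (a + b - t)) = f ∘ (a + b - ·) from rfl, image_comp,
        image_const_sub_Icc, add_sub_cancel_right, add_sub_cancel_left]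
  · exact ⟨f, f', hf, hpos, rfl⟩

theorem exists_reparam_of_image_eq (hf : IsWellParametrized f f' a b)
    (hg : IsWellParametrized g g' a' b') (hf₀ : ∀ t ∈ Icc a b, 0 < f' t 0)
    (hg₀ : ∀ s ∈ Icc a' b', 0 < g' s 0) (him : f '' Icc a b = g '' Icc a' b') (hab' : a' ≤ b') :
    ∃ φ : ℝ → ℝ, ContinuousOn φ (Icc a' b') ∧ φ a' = a ∧ φ b' = b ∧
      ∀ s ∈ Icc a' b', φ s ∈ Icc a b ∧ f (φ s) = g s := by
  have hu := hf.strictMonoOn_time hf₀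
  set φ : ℝ → ℝ := invFunOn f (Icc a b) ∘ g
  have hφ : ∀ s ∈ Icc a' b', φ s ∈ Icc a b ∧ f (φ s) = g s := fun s hs =>
    invFunOn_pos (show g s ∈ f '' Icc a b from him ▸ mem_image_of_mem g hs)
  have hφ_mono : StrictMonoOn φ (Icc a' b') := fun s hs r hr hsr => by
    refine (hu.lt_iff_lt (hφ s hs).1 (hφ r hr).1).1 ?_
    simpa only [(hφ s hs).2, (hφ r hr).2] using hg.strictMonoOn_time hg₀ hs hr hsr
  have hφ_img : φ '' Icc a' b' = Icc a b := by
    rw [image_comp, ← him]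
    exact (InjOn.invFunOn_image (fun x hx y hy h => hu.injOn hx hy (congrFun h 0)) subset_rfl)
  have hφ_cont : ContinuousOn φ (Icc a' b') :=
    hφ_mono.continuousOn_of_ordConnected_image ordConnected_Icc
      (by rw [hφ_img]; exact ordConnected_Icc)
  obtain ⟨hφa, hφb⟩ := (Icc_eq_Icc_iff (hφ_mono.monotoneOn (left_mem_Icc.2 hab')
    (right_mem_Icc.2 hab') hab')).1 ((hφ_cont.image_Icc_of_monotoneOn hab'
      hφ_mono.monotoneOn).symm.trans hφ_img)
  exact ⟨φ, hφ_cont, hφa, hφb, hφ⟩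

theorem sub_eq_sub_of_image_eq (hf : IsWellParametrized f f' a b)
    (hg : IsWellParametrized g g' a' b') (hf₀ : ∀ t ∈ Icc a b, 0 < f' t 0)
    (hg₀ : ∀ s ∈ Icc a' b', 0 < g' s 0) (him : f '' Icc a b = g '' Icc a' b') (hab' : a' ≤ b') :
    b - a = b' - a' := by
  obtain ⟨φ, hφ_cont, hφa, hφb, hφ⟩ := hf.exists_reparam_of_image_eq hg hf₀ hg₀ him hab'
  have hφ_deriv : ∀ s ∈ Ioo a' b', HasDerivAt φ 1 s := by
    intro s hs
    have hsI := Ioo_subset_Icc_self hs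
    have hφs := (hφ s hsI).1
    have hfg : f ∘ φ =ᶠ[𝓝 s] g :=
      eventually_of_mem (Ioo_mem_nhds hs.1 hs.2) fun r hr => (hφ r (Ioo_subset_Icc_self hr)).2
    have hd := (hf.hasDerivAt_time hφs).of_comp_left (hφ_cont.continuousAt (Icc_mem_nhds hs.1 hs.2))
      (hg.hasDerivAt_time hsI) (hf₀ _ hφs).ne' (hfg.fun_comp (· 0))
    rwa [eq_one_of_hasDerivAt_comp (hf _ hφs).1 hd (hg s hsI).1 hfg (hf _ hφs).2 (hg s hsI).2
      (div_pos (hg₀ s hsI) (hf₀ _ hφs))] at hd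
  have := intervalIntegral.integral_eq_sub_of_hasDerivAt_of_le hab' hφ_cont hφ_deriv
    intervalIntegrable_const
  simp only [intervalIntegral.integral_const, smul_eq_mul, mul_one, hφa, hφb] at this
  exact this.symm

end IsWellParametrized

end Curves

theorem wellParam_same_arc_same_time_general (d : ℕ) [NeZero d]
    (a b a' b' : ℝ) (hab' : a' ≤ b')
    (f f' : ℝ → Fin d → ℝ) (g g' : ℝ → Fin d → ℝ)
    (hf : ∀ t ∈ Set.Icc a b, HasDerivAt f (f' t) t)
    (hg : ∀ t ∈ Set.Icc a' b', HasDerivAt g (g' t) t)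
    (hwpf : ∀ t ∈ Set.Icc a b,
      (f' t 0) ^ 2 - ∑ i ∈ Finset.univ.erase (0 : Fin d), (f' t i) ^ 2 = 1)
    (hwpg : ∀ t ∈ Set.Icc a' b',
      (g' t 0) ^ 2 - ∑ i ∈ Finset.univ.erase (0 : Fin d), (g' t i) ^ 2 = 1)
    (him : f '' Set.Icc a b = g '' Set.Icc a' b') :
    b - a = b' - a' := by
  have hfw : IsWellParametrized f f' a b := fun t ht => ⟨hf t ht, hwpf t ht⟩
  have hgw : IsWellParametrized g g' a' b' := fun t ht => ⟨hg t ht, hwpg t ht⟩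
  obtain ⟨F, F', hF, hF₀, hFim⟩ := hfw.exists_futureDirected
  obtain ⟨G, G', hG, hG₀, hGim⟩ := hgw.exists_futureDirected
  exact hF.sub_eq_sub_of_image_eq hG hF₀ hG₀ (by rw [hFim, hGim, him]) hab'

/-- Two well-parametrized timelike curves tracing the same arc take equal
parameter time. -/
theorem wellParam_same_arc_same_time (d : ℕ) [NeZero d] (hd : 2 ≤ d)
    (a b a' b' : ℝ) (hab : a ≤ b) (hab' : a' ≤ b')
    (f f' : ℝ → Fin d → ℝ) (g g' : ℝ → Fin d → ℝ)
    (hf : ∀ t ∈ Set.Icc a b, HasDerivAt f (f' t) t)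
    (hg : ∀ t ∈ Set.Icc a' b', HasDerivAt g (g' t) t)
    (hwpf : ∀ t ∈ Set.Icc a b,
      (f' t 0) ^ 2 - ∑ i ∈ Finset.univ.erase (0 : Fin d), (f' t i) ^ 2 = 1)
    (hwpg : ∀ t ∈ Set.Icc a' b',
      (g' t 0) ^ 2 - ∑ i ∈ Finset.univ.erase (0 : Fin d), (g' t i) ^ 2 = 1)
    (him : f '' Set.Icc a b = g '' Set.Icc a' b') :
    b - a = b' - a' :=
  wellParam_same_arc_same_time_general d a b a' b' hab' f f' g g' hf hg hwpf hwpg him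
end

section
/- Let d ≥ 2 and let γ : ℝ → ℝ^d be differentiable on a nondegenerate interval I with γ'(t) timelike for every t ∈ I. Then every chord of γ is timelike: for all x, y ∈ I with x ≠ y, the vector γ(x) − γ(y) is timelike, i.e. (γ(x)₀ − γ(y)₀)² > (γ(x)₁ − γ(y)₁)² + ⋯ + (γ(x)_{d−1} − γ(y)_{d−1})². -/
/-!
For every `u` in the closed unit ball of the space coordinates, the function
`t ↦ γ(t)₀ - ⟨u, γ(t)⟩` has derivative `γ'(t)₀ - ⟨u, γ'(t)⟩`, which is positive by
Cauchy–Schwarz once `γ'` is timelike and future directed, so the function is strictly increasing.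
Hence every chord `Δ` satisfies `⟨u, Δ⟩ < Δ₀` for all such `u`, which forces `Δ` to be timelike.
By Darboux's theorem `γ'(t)₀` has constant sign on the interval, so replacing `γ` by `-γ`
if necessary makes `γ'` future directed.
-/

open Finset

variable {ι : Type*}

def IsTimelike (time : ι) (space : Finset ι) (v : ι → ℝ) : Prop :=
  ∑ i ∈ space, v i ^ 2 < v time ^ 2

variable {time : ι} {space : Finset ι} {v : ι → ℝ}

namespace IsTimelike

lemma neg (h : IsTimelike time space v) : IsTimelike time space (-v) := by
  simpa [IsTimelike] using h

lemma time_ne_zero (h : IsTimelike time space v) : v time ≠ 0 := by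
  intro h0
  have hspace : 0 ≤ ∑ i ∈ space, v i ^ 2 := sum_nonneg fun i _ => sq_nonneg (v i)
  unfold IsTimelike at h
  rw [h0] at h
  linarith

lemma sum_mul_lt (h : IsTimelike time space v) (htime : 0 ≤ v time) {u : ι → ℝ}
    (hu : ∑ i ∈ space, u i ^ 2 ≤ 1) : ∑ i ∈ space, u i * v i < v time := by
  have hspace : 0 ≤ ∑ i ∈ space, v i ^ 2 := sum_nonneg fun i _ => sq_nonneg (v i)
  refine lt_of_pow_lt_pow_left₀ 2 htime ?_
  calc (∑ i ∈ space, u i * v i) ^ 2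
      ≤ (∑ i ∈ space, u i ^ 2) * ∑ i ∈ space, v i ^ 2 := sum_mul_sq_le_sq_mul_sq space u v
    _ ≤ ∑ i ∈ space, v i ^ 2 := mul_le_of_le_one_left hspace hu
    _ < v time ^ 2 := h

end IsTimelike

lemma isTimelike_of_forall_sum_mul_lt
    (h : ∀ u : ι → ℝ, ∑ i ∈ space, u i ^ 2 ≤ 1 → ∑ i ∈ space, u i * v i < v time) :
    IsTimelike time space v := by
  have htime : 0 < v time := by simpa using h 0 (by simp)
  unfold IsTimelike
  by_contra! hS
  set S := ∑ i ∈ space, v i ^ 2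
  have hSpos : 0 < S := (pow_pos htime 2).trans_le hS
  -- `v time ^ 2 ≤ S` puts the test vector `(v time / S) • v` in the unit ball
  have hu : ∑ i ∈ space, (v time / S * v i) ^ 2 = v time ^ 2 / S := by
    calc ∑ i ∈ space, (v time / S * v i) ^ 2 = (v time / S) ^ 2 * S := by
          simp only [mul_pow, ← mul_sum]; rfl
      _ = v time ^ 2 / S := by field_simp
  have huv : ∑ i ∈ space, v time / S * v i * v i = v time := by
    calc ∑ i ∈ space, v time / S * v i * v i = v time / S * S := by
          simp only [mul_assoc, ← sq, ← mul_sum]; rfl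
      _ = v time := div_mul_cancel₀ _ hSpos.ne'
  have := h (fun i => v time / S * v i) (hu ▸ (div_le_one hSpos).2 hS)
  rw [huv] at this
  exact this.false

section Curve

variable {I : Set ℝ} {γ γ' : ℝ → ι → ℝ} {x y : ℝ}

theorem isTimelike_sub_of_hasDerivAt_of_pos (hI : I.OrdConnected)
    (hγ : ∀ t ∈ I, HasDerivAt γ (γ' t) t) (htl : ∀ t ∈ I, IsTimelike time space (γ' t))
    (hfuture : ∀ t ∈ I, 0 < γ' t time) (hx : x ∈ I) (hy : y ∈ I) (hxy : x < y) :
    IsTimelike time space (γ y - γ x) := by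
  refine isTimelike_of_forall_sum_mul_lt fun u hu => ?_
  set f : ℝ → ℝ := fun t => γ t time - ∑ i ∈ space, u i * γ t i
  have hf : ∀ t ∈ I, HasDerivAt f (γ' t time - ∑ i ∈ space, u i * γ' t i) t := fun t ht =>
    have hcoord := hasDerivAt_pi.1 (hγ t ht)
    (hcoord time).sub (HasDerivAt.fun_sum fun i _ => (hcoord i).const_mul (u i))
  have hmono : StrictMonoOn f I :=
    strictMonoOn_of_hasDerivWithinAt_pos hI.convex
      (fun t ht => (hf t ht).continuousAt.continuousWithinAt)
      (fun t ht => (hf t (interior_subset ht)).hasDerivWithinAt)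
      (fun t ht => sub_pos.2 <|
        (htl t (interior_subset ht)).sum_mul_lt (hfuture t (interior_subset ht)).le hu)
  have hfxy := hmono hx hy hxy
  simp only [f] at hfxy
  simp only [Pi.sub_apply, mul_sub, sum_sub_distrib]
  linarith

theorem isTimelike_sub_of_hasDerivAt (hI : I.OrdConnected)
    (hγ : ∀ t ∈ I, HasDerivAt γ (γ' t) t) (htl : ∀ t ∈ I, IsTimelike time space (γ' t))
    (hx : x ∈ I) (hy : y ∈ I) (hxy : x ≠ y) :
    IsTimelike time space (γ x - γ y) := by
  wlog hfuture : ∀ t ∈ I, 0 < γ' t time generalizing γ γ'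
  · have hpast : ∀ t ∈ I, γ' t time < 0 :=
      (hasDerivWithinAt_forall_lt_or_forall_gt_of_forall_ne hI.convex
        (fun t ht => (hasDerivAt_pi.1 (hγ t ht) time).hasDerivWithinAt)
        (fun t ht => (htl t ht).time_ne_zero)).resolve_right hfuture
    have := this (γ := -γ) (γ' := -γ')
      (fun t ht => hasDerivAt_pi.2 fun i => (hasDerivAt_pi.1 (hγ t ht) i).neg)
      (fun t ht => (htl t ht).neg) (fun t ht => neg_pos.2 (hpast t ht))
    simpa only [Pi.neg_apply, neg_sub_neg, neg_sub] using this.neg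
  rcases hxy.lt_or_gt with hlt | hgt
  · simpa only [neg_sub] using
      (isTimelike_sub_of_hasDerivAt_of_pos hI hγ htl hfuture hx hy hlt).neg
  · exact isTimelike_sub_of_hasDerivAt_of_pos hI hγ htl hfuture hy hx hgt

end Curve

theorem timelike_curve_chords_timelike_general (d : ℕ) [NeZero d]
    (I : Set ℝ) (hI : I.OrdConnected)
    (γ γ' : ℝ → Fin d → ℝ)
    (hγ : ∀ t ∈ I, HasDerivAt γ (γ' t) t)
    (htl : ∀ t ∈ I, ∑ i ∈ Finset.univ.erase (0 : Fin d), (γ' t i) ^ 2 < (γ' t 0) ^ 2) :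
    ∀ x ∈ I, ∀ y ∈ I, x ≠ y →
      ∑ i ∈ Finset.univ.erase (0 : Fin d), (γ x i - γ y i) ^ 2 < (γ x 0 - γ y 0) ^ 2 :=
  fun _ hx _ hy hxy => isTimelike_sub_of_hasDerivAt hI hγ htl hx hy hxy

/-- Every chord of a timelike curve is timelike (timelike implies STL). -/
theorem timelike_curve_chords_timelike (d : ℕ) [NeZero d] (hd : 2 ≤ d)
    (I : Set ℝ) (hI : I.OrdConnected) (hI2 : ∃ x ∈ I, ∃ y ∈ I, x ≠ y)
    (γ γ' : ℝ → Fin d → ℝ)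
    (hγ : ∀ t ∈ I, HasDerivAt γ (γ' t) t)
    (htl : ∀ t ∈ I, ∑ i ∈ Finset.univ.erase (0 : Fin d), (γ' t i) ^ 2 < (γ' t 0) ^ 2) :
    ∀ x ∈ I, ∀ y ∈ I, x ≠ y →
      ∑ i ∈ Finset.univ.erase (0 : Fin d), (γ x i - γ y i) ^ 2 < (γ x 0 - γ y 0) ^ 2 :=
  timelike_curve_chords_timelike_general d I hI γ γ' hγ htl
end

section
/- Let a < b be reals and let 𝒜 be a set of ordered pairs (x, y) of reals with x < y, thought of as closed subintervals [x, y] of [a, b]. Assume: (beginable) for every x ∈ [a,b] there exist c and d with c < x < d such that for every y ∈ [c,d] ∩ [a,b], if y < x then (y, x) ∈ 𝒜 and if x < y then (x, y) ∈ 𝒜; (connectable) whenever (x, y) ∈ 𝒜 and (y, z) ∈ 𝒜 then (x, z) ∈ 𝒜. Then (a, b) ∈ 𝒜. -/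
/-- Cousin's Lemma: a beginable and connectable family of subintervals of
`[a,b]` contains `[a,b]` itself. -/
theorem cousin_lemma (a b : ℝ) (hab : a < b) (A : Set (ℝ × ℝ))
    (hbegin : ∀ x ∈ Set.Icc a b, ∃ c d : ℝ, c < x ∧ x < d ∧
      ∀ y ∈ Set.Icc c d ∩ Set.Icc a b,
        (y < x → (y, x) ∈ A) ∧ (x < y → (x, y) ∈ A))
    (hconn : ∀ x y z : ℝ, (x, y) ∈ A → (y, z) ∈ A → (x, z) ∈ A) :
    (a, b) ∈ A := by
  set S : Set ℝ := {t | t ∈ Set.Ioc a b ∧ (a, t) ∈ A} with hS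
  -- S is nonempty
  obtain ⟨c, d, hca, had, h⟩ := hbegin a ⟨le_refl a, hab.le⟩
  have hy0 : min d b ∈ S := by
    have hay : a < min d b := lt_min had hab
    refine ⟨⟨hay, min_le_right _ _⟩, ?_⟩
    exact (h (min d b) ⟨⟨le_of_lt (lt_of_lt_of_le hca hay.le),
      min_le_left _ _⟩, hay.le, min_le_right _ _⟩).2 hay
  have hne : S.Nonempty := ⟨_, hy0⟩
  have hbdd : BddAbove S := ⟨b, fun t ht => ht.1.2⟩
  set s := sSup S with hsdef
  have hsb : s ≤ b := csSup_le hne (fun t ht => ht.1.2)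
  have has : a < s := lt_of_lt_of_le (hy0.1.1) (le_csSup hbdd hy0)
  obtain ⟨c', d', hc's, hsd', h'⟩ := hbegin s ⟨has.le, hsb⟩
  obtain ⟨t, htS, hct⟩ := exists_lt_of_lt_csSup hne hc's
  have hts : t ≤ s := le_csSup hbdd htS
  have haS : (a, s) ∈ A := by
    rcases eq_or_lt_of_le hts with h1 | h1
    · exact h1 ▸ htS.2
    · have := (h' t ⟨⟨hct.le, le_of_lt (lt_of_le_of_lt hts hsd')⟩,
        htS.1.1.le, htS.1.2⟩).1 h1
      exact hconn a t s htS.2 this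
  rcases eq_or_lt_of_le hsb with h1 | h1
  · exact h1 ▸ haS
  · exfalso
    have hy : s < min d' b := lt_min hsd' h1
    have hyS : min d' b ∈ S := by
      have hA : (s, min d' b) ∈ A :=
        (h' (min d' b) ⟨⟨(hc's.trans hy).le, min_le_left _ _⟩,
          (has.trans hy).le, min_le_right _ _⟩).2 hy
      exact ⟨⟨has.trans hy, min_le_right _ _⟩, hconn a s _ haS hA⟩
    exact absurd (le_csSup hbdd hyS) (not_le_of_gt hy)
end

section
/- Let γ : ℝ → ℝ² be differentiable on all of ℝ, and suppose that for every t ∈ ℝ one has γ(t)₂² − γ(t)₁² = 1 (the curve lies on the vertical unit hyperbola) and γ'(t)₁² − γ'(t)₂² = 1 (the curve is well-parametrized and timelike). Then exactly one of the following holds: for all t ∈ ℝ, γ'(t)₁ = γ(t)₂ and γ'(t)₂ = γ(t)₁; or for all t ∈ ℝ, γ'(t)₁ = −γ(t)₂ and γ'(t)₂ = −γ(t)₁. In particular, in the first case the function e(t) := γ(t)₁ + γ(t)₂ satisfies e'(t) = e(t) for all t, and in the second case the function e(t) := γ(−t)₁ + γ(−t)₂ satisfies e'(t) = e(t) for all t.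 -/
/-!
Differentiating `γ₂² - γ₁² = 1` shows that `γ'` is Minkowski-orthogonal to `γ`; together with
`γ'₁² - γ'₂² = 1` this forces `γ' t = ±(γ t).swap` at every `t`, the sign being that of
`γ'₁ γ₂`. Both factors never vanish, and `γ₂` is continuous while `γ'₁` is a derivative, so by
the intermediate value theorem and Darboux's theorem each has constant sign; hence so does the
sign in `γ' = ±γ.swap`.
-/

theorem HasDerivAt.fst {𝕜 E F : Type*} [NontriviallyNormedField 𝕜] [NormedAddCommGroup E]
    [NormedSpace 𝕜 E] [NormedAddCommGroup F] [NormedSpace 𝕜 F] {f : 𝕜 → E × F} {f' : E × F}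
    {x : 𝕜} (h : HasDerivAt f f' x) : HasDerivAt (fun s => (f s).1) f'.1 x :=
  (ContinuousLinearMap.fst 𝕜 E F).hasFDerivAt.comp_hasDerivAt x h

theorem HasDerivAt.snd {𝕜 E F : Type*} [NontriviallyNormedField 𝕜] [NormedAddCommGroup E]
    [NormedSpace 𝕜 E] [NormedAddCommGroup F] [NormedSpace 𝕜 F] {f : 𝕜 → E × F} {f' : E × F}
    {x : 𝕜} (h : HasDerivAt f f' x) : HasDerivAt (fun s => (f s).2) f'.2 x :=
  (ContinuousLinearMap.snd 𝕜 E F).hasFDerivAt.comp_hasDerivAt x h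

theorem HasDerivAt.fst_add_snd {𝕜 : Type*} [NontriviallyNormedField 𝕜] {f : 𝕜 → 𝕜 × 𝕜}
    {f' : 𝕜 × 𝕜} {x : 𝕜} (h : HasDerivAt f f' x) :
    HasDerivAt (fun s => (f s).1 + (f s).2) (f'.1 + f'.2) x :=
  h.fst.add h.snd

theorem Continuous.forall_lt_or_forall_gt_of_forall_ne {X α : Type*} [TopologicalSpace X]
    [PreconnectedSpace X] [LinearOrder α] [TopologicalSpace α] [OrderClosedTopology α]
    {f : X → α} (hf : Continuous f) {m : α} (hm : ∀ x, f x ≠ m) :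
    (∀ x, f x < m) ∨ ∀ x, m < f x := by
  by_contra! h
  obtain ⟨⟨a, ha⟩, ⟨b, hb⟩⟩ := h
  obtain ⟨c, hc⟩ := intermediate_value_univ b a hf ⟨hb, ha⟩
  exact hm c hc

theorem hasDerivAt_forall_lt_or_forall_gt_of_forall_ne {f f' : ℝ → ℝ}
    (hf : ∀ x, HasDerivAt f (f' x) x) {m : ℝ} (hm : ∀ x, f' x ≠ m) :
    (∀ x, f' x < m) ∨ ∀ x, m < f' x := by
  simpa using hasDerivWithinAt_forall_lt_or_forall_gt_of_forall_ne convex_univ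
    (fun x _ => (hf x).hasDerivWithinAt) (fun x _ => hm x)

theorem forall_mul_neg_or_forall_mul_pos {ι : Type*} {f g : ι → ℝ}
    (hf : (∀ i, f i < 0) ∨ ∀ i, 0 < f i) (hg : (∀ i, g i < 0) ∨ ∀ i, 0 < g i) :
    (∀ i, f i * g i < 0) ∨ ∀ i, 0 < f i * g i := by
  rcases hf with hf | hf <;> rcases hg with hg | hg
  · exact .inr fun i => mul_pos_of_neg_of_neg (hf i) (hg i)
  · exact .inl fun i => mul_neg_of_neg_of_pos (hf i) (hg i)
  · exact .inl fun i => mul_neg_of_pos_of_neg (hf i) (hg i)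
  · exact .inr fun i => mul_pos (hf i) (hg i)

theorem ne_zero_of_sq_sub_sq_eq_one {a b : ℝ} (h : a ^ 2 - b ^ 2 = 1) : a ≠ 0 := by
  rintro rfl
  nlinarith [sq_nonneg b]

theorem Prod.eq_swap_or_eq_neg_swap_of_fst_mul_fst_eq_snd_mul_snd {x v : ℝ × ℝ}
    (hx : x.2 ^ 2 - x.1 ^ 2 = 1) (hv : v.1 ^ 2 - v.2 ^ 2 = 1) (horth : x.1 * v.1 = x.2 * v.2) :
    v = x.swap ∨ v = -x.swap := by
  obtain ⟨a, b⟩ := x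
  obtain ⟨p, q⟩ := v
  dsimp only at hx hv horth
  have hb : b ≠ 0 := ne_zero_of_sq_sub_sq_eq_one hx
  have hq : q ^ 2 = a ^ 2 := by
    -- `b²q² = a²p² = a²(1 + q²)`, and `b² - a² = 1`
    have : (b * q) ^ 2 = (a * p) ^ 2 := by rw [horth]
    nlinarith
  have hp : (p - b) * (p + b) = 0 := by nlinarith
  rcases mul_eq_zero.1 hp with hp | hp
  · have hpb : p = b := by linarith
    subst hpb
    have : q = a := mul_left_cancel₀ hb (by linarith)
    simp [this]
  · have hpb : p = -b := by linarith
    subst hpb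
    have : q = -a := mul_left_cancel₀ hb (by linarith)
    simp [this]

section WellParametrized

variable {γ γ' : ℝ → ℝ × ℝ}

theorem fst_mul_fst_eq_snd_mul_snd_of_sq_sub_sq_eq {c : ℝ} (hγ : ∀ t, HasDerivAt γ (γ' t) t)
    (hc : ∀ t, (γ t).2 ^ 2 - (γ t).1 ^ 2 = c) (t : ℝ) :
    (γ t).1 * (γ' t).1 = (γ t).2 * (γ' t).2 := by
  have hderiv := ((hγ t).snd.fun_pow 2).fun_sub ((hγ t).fst.fun_pow 2)
  rw [show (fun s => (γ s).2 ^ 2 - (γ s).1 ^ 2) = fun _ => c from funext hc] at hderiv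
  have := hderiv.unique (hasDerivAt_const t c)
  push_cast at this
  linarith

theorem forall_eq_swap_or_forall_eq_neg_swap (hγ : ∀ t, HasDerivAt γ (γ' t) t)
    (hhyp : ∀ t, (γ t).2 ^ 2 - (γ t).1 ^ 2 = 1) (hwp : ∀ t, (γ' t).1 ^ 2 - (γ' t).2 ^ 2 = 1) :
    (∀ t, γ' t = (γ t).swap) ∨ ∀ t, γ' t = -(γ t).swap := by
  have hpt t : γ' t = (γ t).swap ∨ γ' t = -(γ t).swap :=
    Prod.eq_swap_or_eq_neg_swap_of_fst_mul_fst_eq_snd_mul_snd (hhyp t) (hwp t)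
      (fst_mul_fst_eq_snd_mul_snd_of_sq_sub_sq_eq hγ hhyp t)
  have hfst_sign : (∀ t, (γ' t).1 < 0) ∨ ∀ t, 0 < (γ' t).1 :=
    hasDerivAt_forall_lt_or_forall_gt_of_forall_ne (fun t => (hγ t).fst)
      fun t => ne_zero_of_sq_sub_sq_eq_one (hwp t)
  have hsnd_cont : Continuous fun t => (γ t).2 :=
    continuous_iff_continuousAt.2 fun t => (hγ t).snd.continuousAt
  have hsnd_sign : (∀ t, (γ t).2 < 0) ∨ ∀ t, 0 < (γ t).2 :=
    hsnd_cont.forall_lt_or_forall_gt_of_forall_ne fun t => ne_zero_of_sq_sub_sq_eq_one (hhyp t)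
  rcases forall_mul_neg_or_forall_mul_pos hfst_sign hsnd_sign with hneg | hpos
  · refine .inr fun t => (hpt t).resolve_left fun h => ?_
    have := hneg t
    rw [h, Prod.fst_swap] at this
    linarith [mul_self_nonneg (γ t).2]
  · refine .inl fun t => (hpt t).resolve_right fun h => ?_
    have := hpos t
    rw [h, Prod.fst_neg, Prod.fst_swap] at this
    linarith [mul_self_nonneg (γ t).2]

theorem hasDerivAt_fst_add_snd_comp_neg (hγ : ∀ t, HasDerivAt γ (γ' t) t)
    (h : ∀ t, γ' t = -(γ t).swap) (t : ℝ) :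
    HasDerivAt (fun s => (γ (-s)).1 + (γ (-s)).2) ((γ (-t)).1 + (γ (-t)).2) t := by
  have := (hγ (-t)).fst_add_snd.comp t (hasDerivAt_neg t)
  rw [h] at this
  simpa [Function.comp_def, add_comm] using this

end WellParametrized

/-- Dichotomy for well-parametrized timelike curves on the unit hyperbola:
the derivative is everywhere the coordinate swap of the curve, or everywhere
its negative; and in either case an exponential function arises. -/
theorem hyperbola_wellParam_dichotomy (γ γ' : ℝ → ℝ × ℝ)
    (hγ : ∀ t : ℝ, HasDerivAt γ (γ' t) t)
    (hhyp : ∀ t : ℝ, (γ t).2 ^ 2 - (γ t).1 ^ 2 = 1)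
    (hwp : ∀ t : ℝ, (γ' t).1 ^ 2 - (γ' t).2 ^ 2 = 1) :
    Xor' (∀ t : ℝ, (γ' t).1 = (γ t).2 ∧ (γ' t).2 = (γ t).1)
         (∀ t : ℝ, (γ' t).1 = -(γ t).2 ∧ (γ' t).2 = -(γ t).1) ∧
    ((∀ t : ℝ, (γ' t).1 = (γ t).2 ∧ (γ' t).2 = (γ t).1) →
      ∀ t : ℝ, HasDerivAt (fun s => (γ s).1 + (γ s).2) ((γ t).1 + (γ t).2) t) ∧
    ((∀ t : ℝ, (γ' t).1 = -(γ t).2 ∧ (γ' t).2 = -(γ t).1) →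
      ∀ t : ℝ, HasDerivAt (fun s => (γ (-s)).1 + (γ (-s)).2) ((γ (-t)).1 + (γ (-t)).2) t) := by
  have hswap (x v : ℝ × ℝ) : v.1 = x.2 ∧ v.2 = x.1 ↔ v = x.swap := by simp [Prod.ext_iff]
  have hnegswap (x v : ℝ × ℝ) : v.1 = -x.2 ∧ v.2 = -x.1 ↔ v = -x.swap := by simp [Prod.ext_iff]
  simp only [hswap, hnegswap]
  have hnot_both : ¬((∀ t, γ' t = (γ t).swap) ∧ ∀ t, γ' t = -(γ t).swap) := by
    rintro ⟨hp, hn⟩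
    have := congrArg Prod.fst ((hp 0).symm.trans (hn 0))
    simp only [Prod.fst_swap, Prod.fst_neg] at this
    exact ne_zero_of_sq_sub_sq_eq_one (hhyp 0) (by linarith)
  refine ⟨(xor_iff_or_and_not_and _ _).2
    ⟨forall_eq_swap_or_forall_eq_neg_swap hγ hhyp hwp, hnot_both⟩, fun h t => ?_,
    hasDerivAt_fst_add_snd_comp_neg hγ⟩
  simpa [h t, add_comm] using (hγ t).fst_add_snd
end

section
/- Let d ≥ 2. Let β, γ : ℝ → ℝ^d be differentiable on nondegenerate intervals I_β, I_γ with β'(t)₀² − (β'(t)₁² + ⋯ + β'(t)_{d−1}²) = 1 for all t ∈ I_β and γ'(t)₀² − (γ'(t)₁² + ⋯ + γ'(t)_{d−1}²) = 1 for all t ∈ I_γ (well-parametrized timelike curves). Let β*, γ* : ℝ → ℝ^d be differentiable on nondegenerate intervals I, J with timelike derivative at every point, such that β*(I) ⊆ β(I_β) and γ*(J) ⊆ γ(I_γ). Let x < y with [x, y] ⊆ I ∩ J, and let x_β, y_β ∈ I_β and x_γ, y_γ ∈ I_γ satisfy β(x_β) = β*(x), β(y_β) = β*(y), γ(x_γ)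 = γ*(x), γ(y_γ) = γ*(y). If μ(γ*'(z)) > μ(β*'(z)) for every z ∈ (x, y), then |x_γ − y_γ| > |x_β − y_β|. -/
/-!
The time coordinate of a well-parametrized timelike curve `c` has nonvanishing derivative, hence
is strictly monotone by Darboux's theorem. So a timelike curve `c*` running inside the range of `c`
is `c ∘ σ` for the reparametrization `σ = (c₀)⁻¹ ∘ c*₀`, which is differentiable by the inverse
function theorem in one variable. From `c*' = σ' • c'(σ)` and `μ(c') = 1` we get `|σ'| = μ(c*')`,
while `σ` maps the endpoints `x, y` to the parameters of the corresponding events on `c`.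
It remains to compare `|σ_β(y) - σ_β(x)|` with `|σ_γ(y) - σ_γ(x)|` when `|σ_β'| < |σ_γ'|`:
`σ_γ'` has a constant sign `ε`, and `ε σ_γ ± σ_β` are strictly increasing.
-/

open Set Filter Topology Function

def minkowskiNormSq {d : ℕ} [NeZero d] (v : Fin d → ℝ) : ℝ :=
  v 0 ^ 2 - ∑ i ∈ Finset.univ.erase 0, v i ^ 2

section Minkowski

variable {d : ℕ} [NeZero d]

theorem minkowskiNormSq_smul (r : ℝ) (v : Fin d → ℝ) :
    minkowskiNormSq (r • v) = r ^ 2 * minkowskiNormSq v := by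
  simp only [minkowskiNormSq, Pi.smul_apply, smul_eq_mul, mul_pow, ← Finset.mul_sum]
  ring

theorem time_ne_zero_of_minkowskiNormSq_pos {v : Fin d → ℝ} (hv : 0 < minkowskiNormSq v) :
    v 0 ≠ 0 := by
  intro h0
  have hsum : 0 ≤ ∑ i ∈ Finset.univ.erase 0, v i ^ 2 := Finset.sum_nonneg fun i _ => sq_nonneg _
  simp only [minkowskiNormSq, h0] at hv
  linarith

end Minkowski

section Monotonicity

variable {f f' : ℝ → ℝ} {S : Set ℝ}

theorem exists_abs_eq_one_mul_deriv_pos (hS : S.OrdConnected)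
    (hf : ∀ t ∈ S, HasDerivAt f (f' t) t) (hf' : ∀ t ∈ S, f' t ≠ 0) :
    ∃ ε : ℝ, |ε| = 1 ∧ ∀ t ∈ S, 0 < ε * f' t := by
  rcases hasDerivWithinAt_forall_lt_or_forall_gt_of_forall_ne hS.convex
    (fun t ht => (hf t ht).hasDerivWithinAt) hf' with hneg | hpos
  · exact ⟨-1, by norm_num, fun t ht => by linarith [hneg t ht]⟩
  · exact ⟨1, by norm_num, fun t ht => by linarith [hpos t ht]⟩

theorem strictMonoOn_of_hasDerivAt_pos (hS : S.OrdConnected)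
    (hf : ∀ t ∈ S, HasDerivAt f (f' t) t) (hf' : ∀ t ∈ S, 0 < f' t) : StrictMonoOn f S :=
  strictMonoOn_of_hasDerivWithinAt_pos hS.convex
    (fun t ht => (hf t ht).continuousAt.continuousWithinAt)
    (fun t ht => (hf t (interior_subset ht)).hasDerivWithinAt)
    (fun t ht => hf' t (interior_subset ht))

theorem strictMonoOn_or_strictAntiOn_of_hasDerivAt_ne_zero (hS : S.OrdConnected)
    (hf : ∀ t ∈ S, HasDerivAt f (f' t) t) (hf' : ∀ t ∈ S, f' t ≠ 0) :
    StrictMonoOn f S ∨ StrictAntiOn f S := by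
  have hcont : ContinuousOn f S := fun t ht => (hf t ht).continuousAt.continuousWithinAt
  have hderiv : ∀ t ∈ interior S, HasDerivWithinAt f (f' t) (interior S) t :=
    fun t ht => (hf t (interior_subset ht)).hasDerivWithinAt
  rcases hasDerivWithinAt_forall_lt_or_forall_gt_of_forall_ne hS.convex
    (fun t ht => (hf t ht).hasDerivWithinAt) hf' with hneg | hpos
  · exact .inr <| strictAntiOn_of_hasDerivWithinAt_neg hS.convex hcont hderiv
      fun t ht => hneg t (interior_subset ht)
  · exact .inl <| strictMonoOn_of_hasDerivAt_pos hS hf hpos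

theorem image_Icc_mem_nhds_of_hasDerivAt_ne_zero {x y z : ℝ}
    (hf : ∀ t ∈ Icc x y, HasDerivAt f (f' t) t) (hf' : ∀ t ∈ Icc x y, f' t ≠ 0)
    (hz : z ∈ Ioo x y) : f '' Icc x y ∈ 𝓝 (f z) := by
  have hx : x ∈ Icc x y := left_mem_Icc.2 (hz.1.trans hz.2).le
  have hy : y ∈ Icc x y := right_mem_Icc.2 (hz.1.trans hz.2).le
  have hz' : z ∈ Icc x y := Ioo_subset_Icc_self hz
  have hbetween : f z ∈ Ioo (min (f x) (f y)) (max (f x) (f y)) := by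
    rcases strictMonoOn_or_strictAntiOn_of_hasDerivAt_ne_zero ordConnected_Icc hf hf' with h | h
    · exact ⟨min_lt_iff.2 (.inl (h hx hz' hz.1)), lt_max_iff.2 (.inr (h hz' hy hz.2))⟩
    · exact ⟨min_lt_iff.2 (.inr (h hz' hy hz.2)), lt_max_iff.2 (.inl (h hx hz' hz.1))⟩
  have hivt := intermediate_value_uIcc (a := x) (b := y) (f := f)
    fun t ht => (hf t (uIcc_subset_Icc hx hy ht)).continuousAt.continuousWithinAt
  rw [uIcc_of_le hx.2] at hivt
  exact mem_of_superset (Ioo_mem_nhds hbetween.1 hbetween.2) (Ioo_subset_Icc_self.trans hivt)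

theorem abs_sub_lt_abs_sub_of_abs_deriv_lt {g g' : ℝ → ℝ} {x y : ℝ} (hxy : x < y)
    (hfc : ContinuousOn f (Icc x y)) (hgc : ContinuousOn g (Icc x y))
    (hf : ∀ t ∈ Ioo x y, HasDerivAt f (f' t) t) (hg : ∀ t ∈ Ioo x y, HasDerivAt g (g' t) t)
    (hlt : ∀ t ∈ Ioo x y, |f' t| < |g' t|) : |f y - f x| < |g y - g x| := by
  obtain ⟨ε, hε, hεg⟩ := exists_abs_eq_one_mul_deriv_pos ordConnected_Ioo hg
    fun t ht h0 => by simpa [h0] using (abs_nonneg _).trans_lt (hlt t ht)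
  have hlt' : ∀ t ∈ Ioo x y, |f' t| < ε * g' t := fun t ht => by
    rw [← abs_of_pos (hεg t ht), abs_mul, hε, one_mul]
    exact hlt t ht
  have hmono : ∀ s ∈ ({1, -1} : Set ℝ), StrictMonoOn (fun t => ε * g t - s * f t) (Icc x y) := by
    intro s hs
    refine strictMonoOn_of_hasDerivWithinAt_pos (convex_Icc x y)
      ((hgc.const_smul ε).sub (hfc.const_smul s)) (f' := fun t => ε * g' t - s * f' t)
      (fun t ht => ?_) (fun t ht => ?_) <;> rw [interior_Icc] at ht
    · exact (((hg t ht).const_mul ε).sub ((hf t ht).const_mul s)).hasDerivWithinAt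
    · rcases hs with rfl | rfl
      · linarith [le_abs_self (f' t), hlt' t ht]
      · linarith [neg_abs_le (f' t), hlt' t ht]
  have hx : x ∈ Icc x y := left_mem_Icc.2 hxy.le
  have hy : y ∈ Icc x y := right_mem_Icc.2 hxy.le
  have h₁ := hmono 1 (by simp) hx hy hxy
  have h₂ := hmono (-1) (by simp) hx hy hxy
  have hεabs : ε * (g y - g x) ≤ |g y - g x| := by
    simpa [abs_mul, hε] using le_abs_self (ε * (g y - g x))
  rw [abs_sub_lt_iff]
  constructor <;> simp only at h₁ h₂ <;> linarith

end Monotonicity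

/-- Order-connectedness makes the subspace topologies of `S` and `f '' S` order topologies, so the
order isomorphism `S ≃o f '' S` is a homeomorphism. -/
theorem StrictMonoOn.continuousOn_invFunOn {α β : Type*} [LinearOrder α] [TopologicalSpace α]
    [OrderTopology α] [Nonempty α] [LinearOrder β] [TopologicalSpace β] [OrderTopology β]
    {f : α → β} {S : Set α} (hf : StrictMonoOn f S) (hS : S.OrdConnected)
    (hfS : (f '' S).OrdConnected) : ContinuousOn (invFunOn f S) (f '' S) := by
  have hinv : (f '' S).domRestrict (invFunOn f S) = (↑) ∘ (hf.orderIso f S).symm := by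
    funext s
    refine hf.injOn ((surjOn_image f S).mapsTo_invFunOn s.2) ((hf.orderIso f S).symm s).2 ?_
    rw [(surjOn_image f S).rightInvOn_invFunOn s.2]
    exact congrArg Subtype.val ((hf.orderIso f S).apply_symm_apply s).symm
  rw [continuousOn_iff_continuous_domRestrict, hinv]
  exact continuous_subtype_val.comp (hf.orderIso f S).symm.continuous

section InverseFunction

variable {f f' : ℝ → ℝ} {S : Set ℝ}

theorem continuousOn_invFunOn_of_hasDerivAt_pos (hS : S.OrdConnected)
    (hf : ∀ t ∈ S, HasDerivAt f (f' t) t) (hf' : ∀ t ∈ S, 0 < f' t) :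
    ContinuousOn (invFunOn f S) (f '' S) :=
  (strictMonoOn_of_hasDerivAt_pos hS hf hf').continuousOn_invFunOn hS
    (hS.isPreconnected.image f fun t ht => (hf t ht).continuousAt.continuousWithinAt).ordConnected

theorem hasDerivAt_invFunOn_of_hasDerivAt_pos (hS : S.OrdConnected)
    (hf : ∀ t ∈ S, HasDerivAt f (f' t) t) (hf' : ∀ t ∈ S, 0 < f' t) {s : ℝ}
    (hs : f '' S ∈ 𝓝 s) : HasDerivAt (invFunOn f S) (f' (invFunOn f S s))⁻¹ s :=
  have hsS : invFunOn f S s ∈ S := (surjOn_image f S).mapsTo_invFunOn (mem_of_mem_nhds hs)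
  .of_local_left_inverse
    ((continuousOn_invFunOn_of_hasDerivAt_pos hS hf hf' s (mem_of_mem_nhds hs)).continuousAt hs)
    (hf _ hsS) (hf' _ hsS).ne' (eventually_of_mem hs (surjOn_image f S).rightInvOn_invFunOn)

end InverseFunction

section Reparametrization

variable {d : ℕ} [NeZero d]

theorem abs_deriv_eq_sqrt_minkowskiNormSq {c cs : ℝ → Fin d → ℝ} {σ : ℝ → ℝ}
    {v w : Fin d → ℝ} {s z : ℝ} (hσ : HasDerivAt σ s z) (hc : HasDerivAt c w (σ z))
    (hw : minkowskiNormSq w = 1) (hcs : HasDerivAt cs v z) (heq : c ∘ σ =ᶠ[𝓝 z] cs) :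
    |s| = √(minkowskiNormSq v) := by
  rw [hcs.unique ((hc.scomp z hσ).congr_of_eventuallyEq heq.symm), minkowskiNormSq_smul, hw,
    mul_one, Real.sqrt_sq_eq_abs]

theorem exists_reparametrization {S : Set ℝ} (hS : S.OrdConnected) {c c' : ℝ → Fin d → ℝ}
    (hc : ∀ t ∈ S, HasDerivAt c (c' t) t) (hwp : ∀ t ∈ S, minkowskiNormSq (c' t) = 1)
    {cs cs' : ℝ → Fin d → ℝ} {x y : ℝ} (hcs : ∀ t ∈ Icc x y, HasDerivAt cs (cs' t) t)
    (htl : ∀ t ∈ Icc x y, 0 < minkowskiNormSq (cs' t)) (hran : cs '' Icc x y ⊆ c '' S) :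
    ∃ σ σ' : ℝ → ℝ, ContinuousOn σ (Icc x y) ∧ (∀ t ∈ Icc x y, ∀ u ∈ S, c u = cs t → σ t = u) ∧
      ∀ z ∈ Ioo x y, HasDerivAt σ (σ' z) z ∧ |σ' z| = √(minkowskiNormSq (cs' z)) := by
  obtain ⟨ε, -, hε⟩ := exists_abs_eq_one_mul_deriv_pos hS
    (fun t ht => hasDerivAt_pi.1 (hc t ht) 0) fun t ht =>
      time_ne_zero_of_minkowskiNormSq_pos (by rw [hwp t ht]; exact one_pos)
  set f : ℝ → ℝ := fun u => ε * c u 0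
  set g : ℝ → ℝ := fun t => ε * cs t 0
  have hf : ∀ t ∈ S, HasDerivAt f (ε * c' t 0) t := fun t ht =>
    (hasDerivAt_pi.1 (hc t ht) 0).const_mul ε
  have hg : ∀ t ∈ Icc x y, HasDerivAt g (ε * cs' t 0) t := fun t ht =>
    (hasDerivAt_pi.1 (hcs t ht) 0).const_mul ε
  have hfmono : StrictMonoOn f S := strictMonoOn_of_hasDerivAt_pos hS hf hε
  set σ := invFunOn f S ∘ g
  have hσ_eq : ∀ t ∈ Icc x y, ∀ u ∈ S, c u = cs t → σ t = u := fun t _ u hu hcu => by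
    simp only [σ, comp_apply, g, ← hcu]
    exact hfmono.injOn.leftInvOn_invFunOn hu
  have hσ : ∀ t ∈ Icc x y, σ t ∈ S ∧ c (σ t) = cs t := fun t ht => by
    obtain ⟨u, hu, hcu⟩ := hran (mem_image_of_mem cs ht)
    rw [hσ_eq t ht u hu hcu]
    exact ⟨hu, hcu⟩
  have hgS : MapsTo g (Icc x y) (f '' S) := fun t ht =>
    ⟨σ t, (hσ t ht).1, by simp [f, g, (hσ t ht).2]⟩
  refine ⟨σ, fun z => (ε * c' (σ z) 0)⁻¹ * (ε * cs' z 0),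
    (continuousOn_invFunOn_of_hasDerivAt_pos hS hf hε).comp
      (fun t ht => (hg t ht).continuousAt.continuousWithinAt) hgS, hσ_eq, fun z hz => ?_⟩
  have hzI : Icc x y ∈ 𝓝 z := Icc_mem_nhds hz.1 hz.2
  have hz' : z ∈ Icc x y := Ioo_subset_Icc_self hz
  have hσz := hσ z hz'
  have hg' : ∀ t ∈ Icc x y, ε * cs' t 0 ≠ 0 := fun t ht =>
    mul_ne_zero (left_ne_zero_of_mul (hε _ hσz.1).ne')
      (time_ne_zero_of_minkowskiNormSq_pos (htl t ht))
  have hgz : f '' S ∈ 𝓝 (g z) :=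
    mem_of_superset (image_Icc_mem_nhds_of_hasDerivAt_ne_zero hg hg' hz) hgS.image_subset
  have hσd : HasDerivAt σ _ z :=
    (hasDerivAt_invFunOn_of_hasDerivAt_pos hS hf hε hgz).comp z (hg z hz')
  exact ⟨hσd, abs_deriv_eq_sqrt_minkowskiNormSq hσd (hc _ hσz.1) (hwp _ hσz.1) (hcs z hz')
    (eventually_of_mem hzI fun t ht => (hσ t ht).2)⟩

end Reparametrization

theorem gravitational_time_dilation_main_lemma_general (d : ℕ) [NeZero d]
    (Iβ Iγ I J : Set ℝ)
    (hIβ : Iβ.OrdConnected)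
    (hIγ : Iγ.OrdConnected)
    (β β' γ γ' βs βs' γs γs' : ℝ → Fin d → ℝ)
    (hβ : ∀ t ∈ Iβ, HasDerivAt β (β' t) t)
    (hγ : ∀ t ∈ Iγ, HasDerivAt γ (γ' t) t)
    (hwpβ : ∀ t ∈ Iβ,
      (β' t 0) ^ 2 - ∑ i ∈ Finset.univ.erase (0 : Fin d), (β' t i) ^ 2 = 1)
    (hwpγ : ∀ t ∈ Iγ,
      (γ' t 0) ^ 2 - ∑ i ∈ Finset.univ.erase (0 : Fin d), (γ' t i) ^ 2 = 1)
    (hβs : ∀ t ∈ I, HasDerivAt βs (βs' t) t)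
    (hγs : ∀ t ∈ J, HasDerivAt γs (γs' t) t)
    (htlβs : ∀ t ∈ I,
      ∑ i ∈ Finset.univ.erase (0 : Fin d), (βs' t i) ^ 2 < (βs' t 0) ^ 2)
    (htlγs : ∀ t ∈ J,
      ∑ i ∈ Finset.univ.erase (0 : Fin d), (γs' t i) ^ 2 < (γs' t 0) ^ 2)
    (hranβ : βs '' I ⊆ β '' Iβ) (hranγ : γs '' J ⊆ γ '' Iγ)
    (x y : ℝ) (hxy : x < y) (hsub : Set.Icc x y ⊆ I ∩ J)
    (xβ yβ xγ yγ : ℝ)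
    (hxβ : xβ ∈ Iβ) (hyβ : yβ ∈ Iβ) (hxγ : xγ ∈ Iγ) (hyγ : yγ ∈ Iγ)
    (e1 : β xβ = βs x) (e2 : β yβ = βs y) (e3 : γ xγ = γs x) (e4 : γ yγ = γs y)
    (hμ : ∀ z ∈ Set.Ioo x y,
      Real.sqrt ((βs' z 0) ^ 2 - ∑ i ∈ Finset.univ.erase (0 : Fin d), (βs' z i) ^ 2) <
      Real.sqrt ((γs' z 0) ^ 2 - ∑ i ∈ Finset.univ.erase (0 : Fin d), (γs' z i) ^ 2)) :
    |xβ - yβ| < |xγ - yγ| := by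
  have hIxy : Icc x y ⊆ I := fun t ht => (hsub ht).1
  have hJxy : Icc x y ⊆ J := fun t ht => (hsub ht).2
  obtain ⟨σβ, σβ', hσβc, hσβ, hσβ'⟩ := exists_reparametrization hIβ hβ hwpβ
    (fun t ht => hβs t (hIxy ht)) (fun t ht => sub_pos.2 (htlβs t (hIxy ht)))
    ((image_mono hIxy).trans hranβ)
  obtain ⟨σγ, σγ', hσγc, hσγ, hσγ'⟩ := exists_reparametrization hIγ hγ hwpγ
    (fun t ht => hγs t (hJxy ht)) (fun t ht => sub_pos.2 (htlγs t (hJxy ht)))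
    ((image_mono hJxy).trans hranγ)
  have hx : x ∈ Icc x y := left_mem_Icc.2 hxy.le
  have hy : y ∈ Icc x y := right_mem_Icc.2 hxy.le
  rw [abs_sub_comm, ← hσβ x hx xβ hxβ e1, ← hσβ y hy yβ hyβ e2, abs_sub_comm xγ,
    ← hσγ x hx xγ hxγ e3, ← hσγ y hy yγ hyγ e4]
  exact abs_sub_lt_abs_sub_of_abs_deriv_lt hxy hσβc hσγc (fun z hz => (hσβ' z hz).1)
    (fun z hz => (hσγ' z hz).1) fun z hz => by
      rw [(hσβ' z hz).2, (hσγ' z hz).2]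
      exact hμ z hz

/-- The main lemma behind the gravitational time dilation theorems. -/
theorem gravitational_time_dilation_main_lemma (d : ℕ) [NeZero d] (hd : 2 ≤ d)
    (Iβ Iγ I J : Set ℝ)
    (hIβ : Iβ.OrdConnected) (hIβ2 : ∃ x ∈ Iβ, ∃ y ∈ Iβ, x ≠ y)
    (hIγ : Iγ.OrdConnected) (hIγ2 : ∃ x ∈ Iγ, ∃ y ∈ Iγ, x ≠ y)
    (hI : I.OrdConnected) (hI2 : ∃ x ∈ I, ∃ y ∈ I, x ≠ y)
    (hJ : J.OrdConnected) (hJ2 : ∃ x ∈ J, ∃ y ∈ J, x ≠ y)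
    (β β' γ γ' βs βs' γs γs' : ℝ → Fin d → ℝ)
    (hβ : ∀ t ∈ Iβ, HasDerivAt β (β' t) t)
    (hγ : ∀ t ∈ Iγ, HasDerivAt γ (γ' t) t)
    (hwpβ : ∀ t ∈ Iβ,
      (β' t 0) ^ 2 - ∑ i ∈ Finset.univ.erase (0 : Fin d), (β' t i) ^ 2 = 1)
    (hwpγ : ∀ t ∈ Iγ,
      (γ' t 0) ^ 2 - ∑ i ∈ Finset.univ.erase (0 : Fin d), (γ' t i) ^ 2 = 1)
    (hβs : ∀ t ∈ I, HasDerivAt βs (βs' t) t)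
    (hγs : ∀ t ∈ J, HasDerivAt γs (γs' t) t)
    (htlβs : ∀ t ∈ I,
      ∑ i ∈ Finset.univ.erase (0 : Fin d), (βs' t i) ^ 2 < (βs' t 0) ^ 2)
    (htlγs : ∀ t ∈ J,
      ∑ i ∈ Finset.univ.erase (0 : Fin d), (γs' t i) ^ 2 < (γs' t 0) ^ 2)
    (hranβ : βs '' I ⊆ β '' Iβ) (hranγ : γs '' J ⊆ γ '' Iγ)
    (x y : ℝ) (hxy : x < y) (hsub : Set.Icc x y ⊆ I ∩ J)
    (xβ yβ xγ yγ : ℝ)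
    (hxβ : xβ ∈ Iβ) (hyβ : yβ ∈ Iβ) (hxγ : xγ ∈ Iγ) (hyγ : yγ ∈ Iγ)
    (e1 : β xβ = βs x) (e2 : β yβ = βs y) (e3 : γ xγ = γs x) (e4 : γ yγ = γs y)
    (hμ : ∀ z ∈ Set.Ioo x y,
      Real.sqrt ((βs' z 0) ^ 2 - ∑ i ∈ Finset.univ.erase (0 : Fin d), (βs' z i) ^ 2) <
      Real.sqrt ((γs' z 0) ^ 2 - ∑ i ∈ Finset.univ.erase (0 : Fin d), (γs' z i) ^ 2)) :
    |xβ - yβ| < |xγ - yγ| :=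
  gravitational_time_dilation_main_lemma_general d Iβ Iγ I J hIβ hIγ β β' γ γ' βs βs' γs γs' hβ hγ
    hwpβ hwpγ hβs hγs htlβs htlγs hranβ hranγ x y hxy hsub xβ yβ xγ yγ hxβ hyβ hxγ hyγ e1 e2 e3 e4
    hμ
end

section
/- Let α, β : ℝ → ℝ² be differentiable on nondegenerate intervals I, J with timelike derivative at every point. Let t₁, t₂ ∈ I and s₁, s₂ ∈ J be such that β(s₁) − α(t₁) and β(s₂) − α(t₂) are spacelike vectors, and such that β(s₁) − α(t₁) and α(t₂) − β(s₂) have the same spatial direction, i.e. (β(s₁)₂ − α(t₁)₂)·(α(t₂)₂ − β(s₂)₂) > 0. Then there exists t strictly between t₁ and t₂ such that α(t) lies in the image β(J). -/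
/-!
A timelike curve is, over its connected set of times, the graph of a strictly `1`-Lipschitz
function of time: Cauchy's mean value theorem compares spatial with temporal increments. If
`β(s₁)` lies spacelike on one side of `α(t₁)` and `β(s₂)` spacelike on the other side of `α(t₂)`,
the difference of the two graph functions changes sign on a common interval of times lying between
the times of `α(t₁)` and `α(t₂)`, and the intermediate value theorem produces the crossing.
-/

open Set Function

theorem Set.mem_uIoo_iff_or {α : Type*} [LinearOrder α] {a b x : α} :
    x ∈ uIoo a b ↔ (a < x ∧ x < b) ∨ (b < x ∧ x < a) := by
  rcases le_total a b with hab | hba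
  · rw [uIoo_of_le hab]
    exact ⟨fun h => Or.inl h, fun h => h.elim id fun h => absurd (h.1.trans h.2) hab.not_gt⟩
  · rw [uIoo_of_ge hba]
    exact ⟨fun h => Or.inr h, fun h => h.elim (fun h => absurd (h.1.trans h.2) hba.not_gt) id⟩

theorem exists_mem_uIoo_eq_zero {h : ℝ → ℝ} {a b : ℝ} (hh : ContinuousOn h (uIcc a b))
    (ha : 0 < h a) (hb : h b < 0) : ∃ c ∈ uIoo a b, h c = 0 := by
  rcases le_total a b with hab | hba
  · rw [uIcc_of_le hab] at hh
    rw [uIoo_of_le hab]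
    exact intermediate_value_Ioo' hab hh ⟨hb, ha⟩
  · rw [uIcc_of_ge hba] at hh
    rw [uIoo_of_ge hba]
    exact intermediate_value_Ioo hba hh ⟨hb, ha⟩

theorem mem_uIoo_of_map_mem_uIoo {f : ℝ → ℝ} {s : Set ℝ} (hs : s.OrdConnected)
    (hf : ContinuousOn f s) (hinj : InjOn f s) {a b t : ℝ} (ha : a ∈ s) (hb : b ∈ s)
    (ht : t ∈ s) (h : f t ∈ uIoo (f a) (f b)) : t ∈ uIoo a b := by
  have hsub := hs.uIcc_subset ha hb
  obtain ⟨c, hc, hfc⟩ := intermediate_value_uIcc (hf.mono hsub) (uIoo_subset_uIcc_self h)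
  obtain rfl := hinj (hsub hc) ht hfc
  have hca : c ≠ a := by rintro rfl; exact left_notMem_uIoo h
  have hcb : c ≠ b := by rintro rfl; exact right_notMem_uIoo h
  rcases le_total a b with hab | hba
  · rw [uIcc_of_le hab] at hc
    rw [uIoo_of_le hab]
    exact ⟨hc.1.lt_of_ne hca.symm, hc.2.lt_of_ne hcb⟩
  · rw [uIcc_of_ge hba] at hc
    rw [uIoo_of_ge hba]
    exact ⟨hc.1.lt_of_ne hcb.symm, hc.2.lt_of_ne hca⟩

theorem injOn_of_hasDerivAt_ne_zero {f f' : ℝ → ℝ} {s : Set ℝ} (hs : s.OrdConnected)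
    (hf : ∀ x ∈ s, HasDerivAt f (f' x) x) (hf' : ∀ x ∈ s, f' x ≠ 0) : InjOn f s := by
  intro a ha b hb hfab
  by_contra hab
  have hsub := hs.uIcc_subset ha hb
  obtain ⟨c, hc, hextr⟩ := exists_isLocalExtr_uIoo hab
    (HasDerivAt.continuousOn fun x hx => hf x (hsub hx)) hfab
  have hcs := hsub (uIoo_subset_uIcc_self hc)
  exact hf' c hcs (hextr.hasDerivAt_eq_zero (hf c hcs))

theorem abs_sub_lt_abs_sub_of_abs_deriv_lt_s13 {f f' g g' : ℝ → ℝ} {s : Set ℝ}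
    (hs : s.OrdConnected) (hf : ∀ x ∈ s, HasDerivAt f (f' x) x)
    (hg : ∀ x ∈ s, HasDerivAt g (g' x) x) (hfg : ∀ x ∈ s, |g' x| < |f' x|)
    {a b : ℝ} (ha : a ∈ s) (hb : b ∈ s) (hab : a ≠ b) : |g b - g a| < |f b - f a| := by
  wlog hlt : a < b generalizing a b
  · rw [abs_sub_comm, abs_sub_comm (f b)]
    exact this hb ha hab.symm (lt_of_le_of_ne (not_lt.1 hlt) hab.symm)
  have hsub := hs.out ha hb
  have hfab : f b - f a ≠ 0 := sub_ne_zero.2 fun h => hab <|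
    injOn_of_hasDerivAt_ne_zero hs hf
      (fun x hx => abs_pos.1 ((abs_nonneg _).trans_lt (hfg x hx))) ha hb h.symm
  obtain ⟨c, hc, hcauchy⟩ := exists_ratio_hasDerivAt_eq_ratio_slope f f' hlt
    (HasDerivAt.continuousOn fun x hx => hf x (hsub hx))
    (fun x hx => hf x (hsub (Ioo_subset_Icc_self hx))) g g'
    (HasDerivAt.continuousOn fun x hx => hg x (hsub hx))
    (fun x hx => hg x (hsub (Ioo_subset_Icc_self hx)))
  have hcs := hsub (Ioo_subset_Icc_self hc)
  have habs := congrArg abs hcauchy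
  rw [abs_mul, abs_mul] at habs
  refine lt_of_mul_lt_mul_right ?_ (abs_nonneg (f' c))
  rw [habs]
  exact mul_lt_mul_of_pos_left (hfg c hcs) (abs_pos.2 hfab)

/-- The graph of such an `f` over `s` is timelike: any two of its points are timelike separated. -/
def StrictlyOneLipschitzOn (f : ℝ → ℝ) (s : Set ℝ) : Prop :=
  ∀ ⦃x⦄, x ∈ s → ∀ ⦃y⦄, y ∈ s → x ≠ y → |f x - f y| < |x - y|

namespace StrictlyOneLipschitzOn

variable {f g : ℝ → ℝ} {s A B : Set ℝ} {p q u v : ℝ}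

theorem abs_sub_le_abs_sub (hf : StrictlyOneLipschitzOn f s) {x y : ℝ} (hx : x ∈ s)
    (hy : y ∈ s) : |f x - f y| ≤ |x - y| := by
  rcases eq_or_ne x y with rfl | hxy
  · simp
  · exact (hf hx hy hxy).le

theorem continuousOn (hf : StrictlyOneLipschitzOn f s) : ContinuousOn f s :=
  (LipschitzOnWith.of_dist_le' (K := 1) fun _ hx _ hy => by
    simpa [Real.dist_eq] using hf.abs_sub_le_abs_sub hx hy).continuousOn

theorem neg (hf : StrictlyOneLipschitzOn f s) : StrictlyOneLipschitzOn (-f) s :=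
  fun x hx y hy hxy => by
    rw [Pi.neg_apply, Pi.neg_apply, neg_sub_neg, abs_sub_comm]
    exact hf hx hy hxy

theorem lt_of_mem_uIcc (hf : StrictlyOneLipschitzOn f A) (hg : StrictlyOneLipschitzOn g B)
    (hp : p ∈ A) (hu : u ∈ B) (hpu : |u - p| < g u - f p) {m : ℝ} (hmA : m ∈ A) (hmB : m ∈ B)
    (hm : m ∈ uIcc u p) : f m < g m := by
  have hsplit : |u - m| + |m - p| = |u - p| := by
    simpa only [Real.dist_eq] using
      dist_add_dist_of_mem_segment (E := ℝ) (by rwa [segment_eq_uIcc])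
  have hfm := (le_abs_self _).trans (hf.abs_sub_le_abs_sub hmA hp)
  have hgm := (le_abs_self _).trans (hg.abs_sub_le_abs_sub hu hmB)
  linarith

theorem lt_and_lt_of_spacelike (hf : StrictlyOneLipschitzOn f A)
    (hg : StrictlyOneLipschitzOn g B) (hp : p ∈ A) (hq : q ∈ A) (hu : u ∈ B) (hv : v ∈ B)
    (hpq : p ≤ q) (hpu : |u - p| < g u - f p) (hqv : |v - q| < f q - g v) : u < q ∧ p < v := by
  have hfpq : f q - f p ≤ q - p := by
    simpa [abs_of_nonneg (sub_nonneg.2 hpq)] using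
      (le_abs_self _).trans (hf.abs_sub_le_abs_sub hq hp)
  -- `g u - g v` exceeds the left side, as `f` gains at most `q - p` from `p` to `q`
  have hspan : |u - p| + |v - q| - (q - p) < |u - v| := by
    linarith [le_abs_self (g u - g v), hg.abs_sub_le_abs_sub hu hv]
  constructor
  · by_contra! hqu
    rw [abs_of_nonneg (by linarith : 0 ≤ u - p)] at hspan
    linarith [abs_sub_le u q v, abs_of_nonneg (sub_nonneg.2 hqu), abs_sub_comm q v]
  · by_contra! hvp
    rw [abs_of_nonpos (by linarith : v - q ≤ 0)] at hspan
    linarith [abs_sub_le u p v, abs_of_nonneg (sub_nonneg.2 hvp)]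

theorem exists_mem_Ioo_eq (hA : A.OrdConnected) (hB : B.OrdConnected)
    (hf : StrictlyOneLipschitzOn f A) (hg : StrictlyOneLipschitzOn g B)
    (hp : p ∈ A) (hq : q ∈ A) (hu : u ∈ B) (hv : v ∈ B) (hpq : p ≤ q)
    (hpu : |u - p| < g u - f p) (hqv : |v - q| < f q - g v) :
    ∃ w ∈ A ∩ B, w ∈ Ioo p q ∧ f w = g w := by
  obtain ⟨huq, hpv⟩ := lt_and_lt_of_spacelike hf hg hp hq hu hv hpq hpu hqv
  have hm₁ : max u p ∈ Icc p q ∩ B :=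
    ⟨⟨le_max_right _ _, max_le huq.le hpq⟩,
      hB.uIcc_subset hu hv ⟨min_le_left _ _ |>.trans (le_max_left _ _),
        max_le (le_max_left _ _) (hpv.le.trans (le_max_right _ _))⟩⟩
  have hm₂ : min v q ∈ Icc p q ∩ B :=
    ⟨⟨le_min hpv.le hpq, min_le_right _ _⟩,
      hB.uIcc_subset hu hv ⟨le_min (min_le_right _ _) (min_le_left _ _ |>.trans huq.le),
        (min_le_left _ _).trans (le_max_right _ _)⟩⟩
  have hsub : uIcc (max u p) (min v q) ⊆ Icc p q ∩ B :=
    (ordConnected_Icc.inter hB).uIcc_subset hm₁ hm₂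
  have hIccA : Icc p q ⊆ A := hA.out hp hq
  have h₁ : f (max u p) < g (max u p) :=
    hf.lt_of_mem_uIcc hg hp hu hpu (hIccA hm₁.1) hm₁.2 ⟨inf_le_sup, le_rfl⟩
  have h₂ : g (min v q) < f (min v q) := neg_lt_neg_iff.1 <|
    hf.neg.lt_of_mem_uIcc hg.neg hq hv (by rw [Pi.neg_apply, Pi.neg_apply]; linarith)
      (hIccA hm₂.1) hm₂.2 ⟨le_rfl, inf_le_sup⟩
  obtain ⟨w, hw, hfg⟩ := exists_mem_uIoo_eq_zero (h := fun x => g x - f x)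
    ((hg.continuousOn.mono fun x hx => (hsub hx).2).sub
      (hf.continuousOn.mono fun x hx => hIccA (hsub hx).1))
    (sub_pos.2 h₁) (sub_neg.2 h₂)
  have hwpq := hsub (uIoo_subset_uIcc_self hw)
  exact ⟨w, ⟨hIccA hwpq.1, hwpq.2⟩,
    ⟨(le_inf hm₁.1.1 hm₂.1.1).trans_lt hw.1, hw.2.trans_le (sup_le hm₁.1.2 hm₂.1.2)⟩,
    (sub_eq_zero.1 hfg).symm⟩

theorem exists_mem_uIoo_eq (hA : A.OrdConnected) (hB : B.OrdConnected)
    (hf : StrictlyOneLipschitzOn f A) (hg : StrictlyOneLipschitzOn g B)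
    (hp : p ∈ A) (hq : q ∈ A) (hu : u ∈ B) (hv : v ∈ B)
    (hpu : |u - p| < g u - f p) (hqv : |v - q| < f q - g v) :
    ∃ w ∈ A ∩ B, w ∈ uIoo p q ∧ f w = g w := by
  rcases le_total p q with hpq | hqp
  · rw [uIoo_of_le hpq]
    exact exists_mem_Ioo_eq hA hB hf hg hp hq hu hv hpq hpu hqv
  · rw [uIoo_of_ge hqp]
    obtain ⟨w, hw, hwqp, hfg⟩ := exists_mem_Ioo_eq hA hB hf.neg hg.neg hq hp hv hu hqp
      (by rw [Pi.neg_apply, Pi.neg_apply]; linarith) (by rw [Pi.neg_apply, Pi.neg_apply]; linarith)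
    exact ⟨w, hw, hwqp, neg_inj.1 hfg⟩

theorem exists_mem_graphOn_inter_of_spacelike (hA : A.OrdConnected) (hB : B.OrdConnected)
    (hf : StrictlyOneLipschitzOn f A) (hg : StrictlyOneLipschitzOn g B) {P Q U V : ℝ × ℝ}
    (hP : P ∈ graphOn f A) (hQ : Q ∈ graphOn f A) (hU : U ∈ graphOn g B) (hV : V ∈ graphOn g B)
    (hPU : (U.1 - P.1) ^ 2 < (U.2 - P.2) ^ 2) (hQV : (V.1 - Q.1) ^ 2 < (V.2 - Q.2) ^ 2)
    (hsign : 0 < (U.2 - P.2) * (Q.2 - V.2)) :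
    ∃ W ∈ graphOn f A ∩ graphOn g B, W.1 ∈ uIoo P.1 Q.1 := by
  obtain ⟨p, hp, rfl⟩ := hP
  obtain ⟨q, hq, rfl⟩ := hQ
  obtain ⟨u, hu, rfl⟩ := hU
  obtain ⟨v, hv, rfl⟩ := hV
  dsimp only at hPU hQV hsign ⊢
  rw [sq_lt_sq] at hPU hQV
  obtain ⟨w, ⟨hwA, hwB⟩, hw, hfg⟩ : ∃ w ∈ A ∩ B, w ∈ uIoo p q ∧ f w = g w := by
    rcases mul_pos_iff.1 hsign with ⟨hup, hqv⟩ | ⟨hup, hqv⟩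
    · exact exists_mem_uIoo_eq hA hB hf hg hp hq hu hv
        (by rwa [abs_of_pos hup] at hPU)
        (by rwa [abs_of_neg (by linarith : g v - f q < 0), neg_sub] at hQV)
    · rw [uIoo_comm]
      exact exists_mem_uIoo_eq hA hB hf hg hq hp hv hu
        (by rwa [abs_of_pos (by linarith : 0 < g v - f q)] at hQV)
        (by rwa [abs_of_neg hup, neg_sub] at hPU)
  exact ⟨(w, f w), ⟨⟨w, hwA, rfl⟩, ⟨w, hwB, by rw [hfg]⟩⟩, hw⟩

end StrictlyOneLipschitzOn

section TimelikeCurve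

variable {K : Set ℝ} {γ γ' : ℝ → ℝ × ℝ}

theorem injOn_fst_of_timelike (hK : K.OrdConnected) (hγ : ∀ t ∈ K, HasDerivAt γ (γ' t) t)
    (htl : ∀ t ∈ K, (γ' t).2 ^ 2 < (γ' t).1 ^ 2) : InjOn (fun t => (γ t).1) K :=
  injOn_of_hasDerivAt_ne_zero hK (fun t ht => (hγ t ht).fst) fun t ht =>
    abs_pos.1 ((abs_nonneg _).trans_lt (sq_lt_sq.1 (htl t ht)))

theorem ordConnected_image_fst_of_hasDerivAt (hK : K.OrdConnected)
    (hγ : ∀ t ∈ K, HasDerivAt γ (γ' t) t) : ((fun t => (γ t).1) '' K).OrdConnected :=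
  isPreconnected_iff_ordConnected.1 <| (isPreconnected_iff_ordConnected.2 hK).image _ <|
    HasDerivAt.continuousOn fun t ht => (hγ t ht).fst

theorem exists_strictlyOneLipschitzOn_graphOn_eq_image (hK : K.OrdConnected)
    (hγ : ∀ t ∈ K, HasDerivAt γ (γ' t) t) (htl : ∀ t ∈ K, (γ' t).2 ^ 2 < (γ' t).1 ^ 2) :
    ∃ f, StrictlyOneLipschitzOn f ((fun t => (γ t).1) '' K) ∧
      γ '' K = graphOn f ((fun t => (γ t).1) '' K) := by
  set τ := fun t => (γ t).1
  have hinv : ∀ t ∈ K, invFunOn τ K (τ t) = t := fun t ht =>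
    (injOn_fst_of_timelike hK hγ htl).leftInvOn_invFunOn ht
  refine ⟨fun x => (γ (invFunOn τ K x)).2, ?_, ?_⟩
  · rintro _ ⟨t, ht, rfl⟩ _ ⟨t', ht', rfl⟩ hne
    simp only [hinv t ht, hinv t' ht']
    exact abs_sub_lt_abs_sub_of_abs_deriv_lt_s13 hK (fun t ht => (hγ t ht).fst)
      (fun t ht => (hγ t ht).snd) (fun t ht => sq_lt_sq.1 (htl t ht)) ht' ht
      (ne_of_apply_ne τ hne).symm
  · rw [graphOn, image_image]
    exact image_congr fun t ht => by rw [hinv t ht]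

end TimelikeCurve

theorem timelike_curves_crossing_general (I J : Set ℝ)
    (hI : I.OrdConnected)
    (hJ : J.OrdConnected)
    (α α' β β' : ℝ → ℝ × ℝ)
    (hα : ∀ t ∈ I, HasDerivAt α (α' t) t)
    (hβ : ∀ t ∈ J, HasDerivAt β (β' t) t)
    (htlα : ∀ t ∈ I, (α' t).2 ^ 2 < (α' t).1 ^ 2)
    (htlβ : ∀ t ∈ J, (β' t).2 ^ 2 < (β' t).1 ^ 2)
    (t₁ t₂ s₁ s₂ : ℝ) (ht₁ : t₁ ∈ I) (ht₂ : t₂ ∈ I) (hs₁ : s₁ ∈ J) (hs₂ : s₂ ∈ J)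
    (hsp1 : ((β s₁).1 - (α t₁).1) ^ 2 < ((β s₁).2 - (α t₁).2) ^ 2)
    (hsp2 : ((β s₂).1 - (α t₂).1) ^ 2 < ((β s₂).2 - (α t₂).2) ^ 2)
    (hdir : ((β s₁).2 - (α t₁).2) * ((α t₂).2 - (β s₂).2) > 0) :
    ∃ t ∈ I, ((t₁ < t ∧ t < t₂) ∨ (t₂ < t ∧ t < t₁)) ∧ α t ∈ β '' J := by
  obtain ⟨f, hf, hαf⟩ := exists_strictlyOneLipschitzOn_graphOn_eq_image hI hα htlα
  obtain ⟨g, hg, hβg⟩ := exists_strictlyOneLipschitzOn_graphOn_eq_image hJ hβ htlβ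
  obtain ⟨W, ⟨hWα, hWβ⟩, hW⟩ := hf.exists_mem_graphOn_inter_of_spacelike
    (ordConnected_image_fst_of_hasDerivAt hI hα) (ordConnected_image_fst_of_hasDerivAt hJ hβ) hg
    (hαf ▸ mem_image_of_mem α ht₁) (hαf ▸ mem_image_of_mem α ht₂)
    (hβg ▸ mem_image_of_mem β hs₁) (hβg ▸ mem_image_of_mem β hs₂) hsp1 hsp2 hdir
  rw [← hαf] at hWα
  obtain ⟨t, ht, rfl⟩ := hWα
  refine ⟨t, ht, mem_uIoo_iff_or.1 ?_, hβg ▸ hWβ⟩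
  exact mem_uIoo_of_map_mem_uIoo hI (HasDerivAt.continuousOn fun t ht => (hα t ht).fst)
    (injOn_fst_of_timelike hI hα htlα) ht₁ ht₂ ht hW

/-- Crossing lemma for two planar timelike curves. -/
theorem timelike_curves_crossing (I J : Set ℝ)
    (hI : I.OrdConnected) (hI2 : ∃ x ∈ I, ∃ y ∈ I, x ≠ y)
    (hJ : J.OrdConnected) (hJ2 : ∃ x ∈ J, ∃ y ∈ J, x ≠ y)
    (α α' β β' : ℝ → ℝ × ℝ)
    (hα : ∀ t ∈ I, HasDerivAt α (α' t) t)
    (hβ : ∀ t ∈ J, HasDerivAt β (β' t) t)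
    (htlα : ∀ t ∈ I, (α' t).2 ^ 2 < (α' t).1 ^ 2)
    (htlβ : ∀ t ∈ J, (β' t).2 ^ 2 < (β' t).1 ^ 2)
    (t₁ t₂ s₁ s₂ : ℝ) (ht₁ : t₁ ∈ I) (ht₂ : t₂ ∈ I) (hs₁ : s₁ ∈ J) (hs₂ : s₂ ∈ J)
    (hsp1 : ((β s₁).1 - (α t₁).1) ^ 2 < ((β s₁).2 - (α t₁).2) ^ 2)
    (hsp2 : ((β s₂).1 - (α t₂).1) ^ 2 < ((β s₂).2 - (α t₂).2) ^ 2)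
    (hdir : ((β s₁).2 - (α t₁).2) * ((α t₂).2 - (β s₂).2) > 0) :
    ∃ t ∈ I, ((t₁ < t ∧ t < t₂) ∨ (t₂ < t ∧ t < t₁)) ∧ α t ∈ β '' J :=
  timelike_curves_crossing_general I J hI hJ α α' β β' hα hβ htlα htlβ t₁ t₂ s₁ s₂ ht₁ ht₂ hs₁ hs₂
    hsp1 hsp2 hdir
end

section
/- Let d ≥ 2 and let γ : ℝ → ℝ^d be differentiable on a nondegenerate interval I with γ'(t) timelike for every t ∈ I. Let x, y ∈ I and p ∈ ℝ^d. If γ(x) ≪ p and it is not the case that γ(y) ≪ p, then there exists z in the closed interval with endpoints x and y such that γ(z) lies on the past light cone of p, i.e. p − γ(z) is lightlike and γ(z)₀ ≤ p₀. -/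
/-!
Taking the maximum of the two strict inequalities defining `q ≪ p` gives one continuous
function `chronoGap p`, negative exactly when `q ≪ p`. Along the (continuous) curve it is
negative at `x` and nonnegative at `y`, so by the intermediate value theorem it vanishes at some
`z` between them; a zero of `chronoGap p` lies on `Λ⁻_p`.
-/

open Finset

section PastCone

variable {d : ℕ} [NeZero d]

def spaceSq (v : Fin d → ℝ) : ℝ := ∑ i ∈ univ.erase (0 : Fin d), v i ^ 2

lemma spaceSq_nonneg (v : Fin d → ℝ) : 0 ≤ spaceSq v :=
  sum_nonneg fun _ _ => sq_nonneg _

def chronoGap (p q : Fin d → ℝ) : ℝ := max (spaceSq (p - q) - (p - q) 0 ^ 2) (q 0 - p 0)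

lemma continuous_chronoGap (p : Fin d → ℝ) : Continuous (chronoGap p) := by
  unfold chronoGap spaceSq
  fun_prop

lemma chronoGap_neg_iff {p q : Fin d → ℝ} :
    chronoGap p q < 0 ↔ spaceSq (p - q) < (p - q) 0 ^ 2 ∧ q 0 < p 0 := by
  simp only [chronoGap, max_lt_iff, sub_neg]

lemma lightlike_of_chronoGap_eq_zero {p q : Fin d → ℝ} (h : chronoGap p q = 0) :
    (p - q) 0 ^ 2 = spaceSq (p - q) ∧ q 0 ≤ p 0 := by
  have hle := h.le
  simp only [chronoGap, max_le_iff, sub_nonpos] at hle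
  refine ⟨?_, hle.2⟩
  rcases max_choice (spaceSq (p - q) - (p - q) 0 ^ 2) (q 0 - p 0) with hmax | hmax <;>
    rw [← chronoGap, h] at hmax
  · linarith
  · -- `q₀ = p₀`, so the spatial part of `p - q` is squeezed between `0` and `(p - q)₀² = 0`.
    have htime : (p - q) 0 = 0 := by simp only [Pi.sub_apply]; linarith
    have := spaceSq_nonneg (p - q)
    rw [htime] at hle ⊢
    linarith

end PastCone

theorem timelike_curve_meets_past_cone_general (d : ℕ) [NeZero d]
    (I : Set ℝ) (hI : I.OrdConnected)
    (γ γ' : ℝ → Fin d → ℝ)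
    (hγ : ∀ t ∈ I, HasDerivAt γ (γ' t) t)
    (x y : ℝ) (hx : x ∈ I) (hy : y ∈ I) (p : Fin d → ℝ)
    (hxp : ∑ i ∈ Finset.univ.erase (0 : Fin d), (p i - γ x i) ^ 2 < (p 0 - γ x 0) ^ 2 ∧
      γ x 0 < p 0)
    (hyp : ¬ (∑ i ∈ Finset.univ.erase (0 : Fin d), (p i - γ y i) ^ 2 < (p 0 - γ y 0) ^ 2 ∧
      γ y 0 < p 0)) :
    ∃ z ∈ Set.uIcc x y,
      (p 0 - γ z 0) ^ 2 = ∑ i ∈ Finset.univ.erase (0 : Fin d), (p i - γ z i) ^ 2 ∧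
      γ z 0 ≤ p 0 := by
  have hγcont : ContinuousOn γ (Set.uIcc x y) := fun t ht =>
    (hγ t (hI.uIcc_subset hx hy ht)).continuousAt.continuousWithinAt
  have hx_neg : chronoGap p (γ x) < 0 := chronoGap_neg_iff.2 hxp
  have hy_nonneg : 0 ≤ chronoGap p (γ y) := not_lt.1 (mt chronoGap_neg_iff.1 hyp)
  obtain ⟨z, hz, hz_zero⟩ :=
    intermediate_value_uIcc ((continuous_chronoGap p).comp_continuousOn hγcont)
      (Set.mem_uIcc.2 (Or.inl ⟨hx_neg.le, hy_nonneg⟩))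
  exact ⟨z, hz, lightlike_of_chronoGap_eq_zero hz_zero⟩

/-- If a timelike curve enters the chronological past of `p` and leaves it,
it meets the past light cone of `p`. -/
theorem timelike_curve_meets_past_cone (d : ℕ) [NeZero d] (hd : 2 ≤ d)
    (I : Set ℝ) (hI : I.OrdConnected) (hI2 : ∃ x ∈ I, ∃ y ∈ I, x ≠ y)
    (γ γ' : ℝ → Fin d → ℝ)
    (hγ : ∀ t ∈ I, HasDerivAt γ (γ' t) t)
    (htl : ∀ t ∈ I, ∑ i ∈ Finset.univ.erase (0 : Fin d), (γ' t i) ^ 2 < (γ' t 0) ^ 2)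
    (x y : ℝ) (hx : x ∈ I) (hy : y ∈ I) (p : Fin d → ℝ)
    (hxp : ∑ i ∈ Finset.univ.erase (0 : Fin d), (p i - γ x i) ^ 2 < (p 0 - γ x 0) ^ 2 ∧
      γ x 0 < p 0)
    (hyp : ¬ (∑ i ∈ Finset.univ.erase (0 : Fin d), (p i - γ y i) ^ 2 < (p 0 - γ y 0) ^ 2 ∧
      γ y 0 < p 0)) :
    ∃ z ∈ Set.uIcc x y,
      (p 0 - γ z 0) ^ 2 = ∑ i ∈ Finset.univ.erase (0 : Fin d), (p i - γ z i) ^ 2 ∧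
      γ z 0 ≤ p 0 :=
  timelike_curve_meets_past_cone_general d I hI γ γ' hγ x y hx hy p hxp hyp
end
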